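/- arXiv:2503.12802 — 7 statements merged into one kernel-verified Lean document; each statement's English description precedes it below -/
import Mathlib

section
/- Let p↓ be a decreasing probability distribution on {1,...,n} and let E ∈ [0,1] satisfy p↓(1) < 1 − E. Then there exists a unique largest m ∈ {2,...,n} such that (E − ∑_{y=m+1}^{n} p↓(y))/(m−1) < p↓(m), and for this m the vector p̃ defined by p̃(1) = 1−E, p̃(y) = (E − ∑_{y'=m+1}^n p↓(y'))/(m−1) for 2 ≤ y ≤ m, and p̃(y) = p↓(y) for m < y ≤ n, is a probability distribution arranged in decreasing order. -/
open Finset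

lemma sum_icc_split (n m : ℕ) (f : ℕ → ℝ) (h1 : 1 ≤ m) (h2 : m ≤ n) :
    ∑ y ∈ Finset.Icc 1 n, f y = (∑ y ∈ Finset.Icc 1 m, f y) + ∑ y ∈ Finset.Icc (m + 1) n, f y := by
  rw [show Finset.Icc 1 n = Finset.Ioc 0 n from Finset.Icc_add_one_left_eq_Ioc 0 n,
    show Finset.Icc 1 m = Finset.Ioc 0 m from Finset.Icc_add_one_left_eq_Ioc 0 m, Finset.Icc_add_one_left_eq_Ioc m n]
  exact (Finset.sum_Ioc_consecutive f (Nat.zero_le m) h2).symm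

/-- For a decreasing probability distribution `p` on `{1,…,n}` and `E ∈ [0,1]` with
`p(1) < 1 − E`, there exists a unique largest `m ∈ {2,…,n}` with
`(E − ∑_{y=m+1}^n p(y))/(m−1) < p(m)`, and the corresponding smoothed vector `p̃`
is a probability distribution arranged in decreasing order. -/
theorem exists_largest_m_and_smoothed_is_decreasing_prob (n : ℕ) (hn : 2 ≤ n) (p : ℕ → ℝ)
    (hnn : ∀ y ∈ Finset.Icc 1 n, 0 ≤ p y)
    (hsum : ∑ y ∈ Finset.Icc 1 n, p y = 1)
    (hdec : ∀ y ∈ Finset.Icc 1 n, ∀ z ∈ Finset.Icc 1 n, y ≤ z → p z ≤ p y)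
    (E : ℝ) (hE0 : 0 ≤ E) (hE1 : E ≤ 1) (hp1 : p 1 < 1 - E) :
    ∃ m, (2 ≤ m ∧ m ≤ n) ∧
      ((E - ∑ y ∈ Finset.Icc (m + 1) n, p y) / ((m : ℝ) - 1) < p m) ∧
      (∀ m', 2 ≤ m' → m' ≤ n →
        ((E - ∑ y ∈ Finset.Icc (m' + 1) n, p y) / ((m' : ℝ) - 1) < p m') → m' ≤ m) ∧
      (let ptilde : ℕ → ℝ := fun y =>
        if y = 1 then 1 - E
        else if y ≤ m then (E - ∑ y' ∈ Finset.Icc (m + 1) n, p y') / ((m : ℝ) - 1)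
        else p y
      (∀ y ∈ Finset.Icc 1 n, 0 ≤ ptilde y) ∧
        (∑ y ∈ Finset.Icc 1 n, ptilde y = 1) ∧
        (∀ y ∈ Finset.Icc 1 n, ∀ z ∈ Finset.Icc 1 n, y ≤ z → ptilde z ≤ ptilde y)) := by
  classical
  set S : Finset ℕ := (Finset.Icc 2 n).filter
    (fun m => (E - ∑ y ∈ Finset.Icc (m + 1) n, p y) / ((m : ℝ) - 1) < p m) with hSdef
  -- 2 ∈ S
  have h2S : 2 ∈ S := by
    rw [hSdef, Finset.mem_filter, Finset.mem_Icc]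
    refine ⟨⟨le_refl 2, hn⟩, ?_⟩
    have hsplit := sum_icc_split n 2 p (by omega) hn
    have hsplit1 := sum_icc_split 2 1 p (by omega) (by omega)
    rw [Finset.Icc_self, Finset.sum_singleton] at hsplit1
    rw [hsplit1, Finset.Icc_self, Finset.sum_singleton] at hsplit
    push_cast
    rw [hsum] at hsplit
    rw [show ((2:ℝ) - 1) = 1 by norm_num, div_one]
    linarith
  have hSne : S.Nonempty := ⟨2, h2S⟩
  set m := S.max' hSne with hmdef
  have hmS : m ∈ S := S.max'_mem hSne
  rw [hSdef, Finset.mem_filter, Finset.mem_Icc] at hmS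
  obtain ⟨⟨hm2, hmn⟩, hmC⟩ := hmS
  have hmax : ∀ m', 2 ≤ m' → m' ≤ n →
      ((E - ∑ y ∈ Finset.Icc (m' + 1) n, p y) / ((m' : ℝ) - 1) < p m') → m' ≤ m := by
    intro m' h2 hn' hc
    exact S.le_max' m' (by rw [hSdef, Finset.mem_filter, Finset.mem_Icc]; exact ⟨⟨h2, hn'⟩, hc⟩)
  set T : ℝ := ∑ y ∈ Finset.Icc (m + 1) n, p y with hTdef
  set c : ℝ := (E - T) / ((m : ℝ) - 1) with hcdef
  have hm1pos : (0:ℝ) < (m : ℝ) - 1 := by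
    have : (2:ℝ) ≤ (m:ℝ) := by exact_mod_cast hm2
    linarith
  -- c < p m ≤ p 1 < 1 - E
  have hpm1 : p m ≤ p 1 := hdec 1 (Finset.mem_Icc.mpr ⟨le_refl 1, by omega⟩)
    m (Finset.mem_Icc.mpr ⟨by omega, hmn⟩) (by omega)
  have hclt : c < 1 - E := lt_of_lt_of_le (lt_of_lt_of_le hmC hpm1) (le_of_lt hp1)
  -- if m < n, p (m+1) ≤ c
  have hkey : m < n → p (m + 1) ≤ c := by
    intro hmn'
    have hnot : ¬ ((E - ∑ y ∈ Finset.Icc (m + 1 + 1) n, p y) / (((m:ℕ) + 1 : ℕ) - 1 : ℝ) < p (m + 1)) := by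
      intro hcon
      have := hmax (m + 1) (by omega) (by omega) (by exact_mod_cast hcon)
      omega
    push_neg at hnot
    have hcast : (((m:ℕ) + 1 : ℕ) : ℝ) - 1 = (m : ℝ) := by push_cast; ring
    rw [hcast] at hnot
    -- p (m+1) ≤ (E - ∑_{m+2..n} p) / m
    have hmpos : (0:ℝ) < (m:ℝ) := by linarith
    rw [le_div_iff₀ hmpos] at hnot
    -- T = p(m+1) + ∑_{m+2..n}
    have hTsplit : T = p (m + 1) + ∑ y ∈ Finset.Icc (m + 2) n, p y := by
      rw [hTdef, show Finset.Icc (m+1) n = Finset.Ioc m n from Finset.Icc_add_one_left_eq_Ioc m n,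
        show Finset.Icc (m+2) n = Finset.Ioc (m+1) n from Finset.Icc_add_one_left_eq_Ioc (m+1) n,
        ← Finset.sum_Ioc_consecutive p (Nat.le_succ m) hmn',
        show Finset.Ioc m (m+1) = Finset.Icc (m+1) (m+1) from (Finset.Icc_add_one_left_eq_Ioc m (m+1)).symm,
        Finset.Icc_self, Finset.sum_singleton]
    rw [hcdef, le_div_iff₀ hm1pos]
    have : ∑ y ∈ Finset.Icc (m + 2) n, p y = T - p (m+1) := by linarith
    nlinarith [hnot]
  have hc0 : 0 ≤ c := by
    rcases eq_or_lt_of_le hmn with heq | hlt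
    · have hT0 : T = 0 := by
        rw [hTdef, heq, Finset.Icc_eq_empty (by omega), Finset.sum_empty]
      rw [hcdef, hT0]
      exact div_nonneg (by linarith) (le_of_lt hm1pos)
    · exact le_trans (hnn (m+1) (Finset.mem_Icc.mpr ⟨by omega, by omega⟩)) (hkey hlt)
  refine ⟨m, ⟨hm2, hmn⟩, hmC, hmax, ?_⟩
  dsimp only
  have hpt : ∀ y, (if y = 1 then 1 - E
      else if y ≤ m then (E - ∑ y' ∈ Finset.Icc (m + 1) n, p y') / ((m : ℝ) - 1)
      else p y) = if y = 1 then 1 - E else if y ≤ m then c else p y := by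
    intro y; rfl
  refine ⟨?_, ?_, ?_⟩
  · intro y hy
    rw [hpt]
    split_ifs with h1 h2
    · linarith
    · exact hc0
    · exact hnn y hy
  · -- sum = 1
    have hsplit := sum_icc_split n m
      (fun y => if y = 1 then 1 - E else if y ≤ m then c else p y) (by omega) hmn
    have hsplit1 := sum_icc_split m 1
      (fun y => if y = 1 then 1 - E else if y ≤ m then c else p y) (by omega) (by omega)
    rw [Finset.Icc_self, Finset.sum_singleton] at hsplit1
    simp only [hpt]
    rw [hsplit, hsplit1]
    have e1 : (if (1:ℕ) = 1 then 1 - E else if 1 ≤ m then c else p 1) = 1 - E := by simp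
    have e2 : ∑ y ∈ Finset.Icc 2 m, (if y = 1 then 1 - E else if y ≤ m then c else p y)
        = ((m : ℝ) - 1) * c := by
      have hconst : ∀ y ∈ Finset.Icc 2 m,
          (if y = 1 then 1 - E else if y ≤ m then c else p y) = c := by
        intro y hy
        rw [Finset.mem_Icc] at hy
        rw [if_neg (by omega), if_pos hy.2]
      rw [Finset.sum_congr rfl hconst, Finset.sum_const, Nat.card_Icc, nsmul_eq_mul,
        show m + 1 - 2 = m - 1 from by omega, Nat.cast_sub (by omega : 1 ≤ m), Nat.cast_one]
    have e3 : ∑ y ∈ Finset.Icc (m + 1) n, (if y = 1 then 1 - E else if y ≤ m then c else p y) = T := by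
      rw [hTdef]
      refine Finset.sum_congr rfl (fun y hy => ?_)
      rw [Finset.mem_Icc] at hy
      rw [if_neg (by omega), if_neg (by omega)]
    rw [e1, e2, e3]
    have hmc : ((m : ℝ) - 1) * c = E - T := by
      rw [hcdef, mul_div_cancel₀ _ (ne_of_gt hm1pos)]
    rw [hmc]; ring
  · intro y hy z hz hyz
    rw [Finset.mem_Icc] at hy hz
    rw [hpt, hpt]
    have hpz1 : z ∈ Finset.Icc 1 n := Finset.mem_Icc.mpr hz
    split_ifs with hz1 hy1 hzm hy1 hym
    · exact le_refl _
    · -- z = 1, y ≠ 1 impossible since y ≤ z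
      omega
    · omega
    · -- z ≠ 1, z ≤ m, y = 1 : c ≤ 1 - E
      linarith
    · exact le_refl _
    · -- y > m, z ≤ m impossible
      omega
    · -- z > m, y = 1 : p z ≤ 1 - E
      have := hdec 1 (Finset.mem_Icc.mpr ⟨le_refl 1, by omega⟩) z hpz1 (by omega)
      linarith
    · -- z > m, 2 ≤ y ≤ m : p z ≤ c
      have hmln : m < n := by omega
      have hz' : p z ≤ p (m+1) := hdec (m+1) (Finset.mem_Icc.mpr ⟨by omega, by omega⟩)
        z hpz1 (by omega)
      exact le_trans hz' (hkey hmln)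
    · -- both > m
      exact hdec y (Finset.mem_Icc.mpr hy) z hpz1 hyz
end

section
/- Let p↓ be a decreasing probability distribution on {1,...,n}, and for E with p↓(1) < 1 − E let M_E be the largest m satisfying (E − ∑_{y=m+1}^n p↓(y))/(m−1) < p↓(m). Then M_E is nonincreasing as a function of E: if E' > E (both with p↓(1) < 1 − E'), then M_{E'} ≤ M_E. -/
open Finset

-- `ME n p E` is the largest `m ∈ {2,…,n}` satisfying
-- `(E − ∑_{y=m+1}^n p(y))/(m−1) < p(m)` (and `0` if no such `m` exists).
open Classical in
noncomputable def ME (n : ℕ) (p : ℕ → ℝ) (E : ℝ) : ℕ :=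
  Nat.findGreatest
    (fun m => 2 ≤ m ∧ (E - ∑ y ∈ Finset.Icc (m + 1) n, p y) / ((m : ℝ) - 1) < p m) n

theorem ME_antitone_general (n : ℕ) (p : ℕ → ℝ)
    (E E' : ℝ) (hEE' : E < E') :
    ME n p E' ≤ ME n p E := by
  refine Nat.findGreatest_mono (fun m ⟨hm, hlt⟩ => ⟨hm, lt_of_le_of_lt ?_ hlt⟩) le_rfl
  have : (1 : ℝ) < m := by exact_mod_cast hm
  gcongr

/-- For a decreasing probability distribution `p` on `{1,…,n}`, the index `M_E` is
nonincreasing in the error parameter `E`: if `E < E'` (both with `p(1) < 1 − E'`),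
then `M_{E'} ≤ M_E`. -/
theorem ME_antitone (n : ℕ) (p : ℕ → ℝ)
    (hnn : ∀ y ∈ Finset.Icc 1 n, 0 ≤ p y)
    (hsum : ∑ y ∈ Finset.Icc 1 n, p y = 1)
    (hdec : ∀ y ∈ Finset.Icc 1 n, ∀ z ∈ Finset.Icc 1 n, y ≤ z → p z ≤ p y)
    (E E' : ℝ) (hE0 : 0 ≤ E) (hEE' : E < E') (hp1' : p 1 < 1 - E') :
    ME n p E' ≤ ME n p E :=
  ME_antitone_general n p E E' hEE'
end

section
/- Let p↓ be a decreasing probability distribution on {1,...,n}, and for each E ∈ [0, 1 − p↓(1)] define the smoothed distribution p̃_E by: p̃_E(1) = 1 − E, p̃_E(y) = (E − ∑_{y'=M_E+1}^n p↓(y'))/(M_E − 1) for 2 ≤ y ≤ M_E, and p̃_E(y) = p↓(y) for y > M_E, where M_E is the largest m with (E − ∑_{y'=m+1}^n p↓(y'))/(m−1) < p↓(m). Then for E' > E (both in [0, 1 − p↓(1)]), p̃_{E'} is majorized by p̃_E. -/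
open Finset

-- The smoothed distribution `p̃_E` built from a decreasing distribution `p` on `{1,…,n}`:
-- it equals `p` if `p(1) ≥ 1 − E`; otherwise `p̃_E(1) = 1 − E`, `p̃_E` takes the flat value
-- `(E − ∑_{y'=M_E+1}^n p(y'))/(M_E − 1)` on positions `2,…,M_E`, and equals `p` beyond `M_E`.
noncomputable def ptilde (n : ℕ) (p : ℕ → ℝ) (E : ℝ) : ℕ → ℝ := fun y =>
  if 1 - E ≤ p 1 then p y
  else if y = 1 then 1 - E
  else if y ≤ ME n p E then
    (E - ∑ y' ∈ Finset.Icc (ME n p E + 1) n, p y') / ((ME n p E : ℝ) - 1)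
  else p y

-- Shannon entropy (natural logarithm) of a distribution on `{1,…,n}`.
noncomputable def ent (n : ℕ) (q : ℕ → ℝ) : ℝ :=
  -∑ y ∈ Finset.Icc 1 n, q y * Real.log (q y)

private lemma sum_split (n k : ℕ) (p : ℕ → ℝ) (hk : k ≤ n) :
    ∑ y ∈ Icc 1 k, p y + ∑ y ∈ Icc (k+1) n, p y = ∑ y ∈ Icc 1 n, p y := by
  rw [Finset.Icc_add_one_left_eq_Ioc k n, show Icc 1 k = Ioc 0 k from Finset.Icc_add_one_left_eq_Ioc 0 k,
    show Icc 1 n = Ioc 0 n from Finset.Icc_add_one_left_eq_Ioc 0 n]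
  exact Finset.sum_Ioc_consecutive p (Nat.zero_le k) hk

private lemma T_succ (n k : ℕ) (p : ℕ → ℝ) (hk : k < n) :
    ∑ y ∈ Icc (k+1) n, p y = p (k+1) + ∑ y ∈ Icc (k+2) n, p y := by
  rw [← Finset.insert_Icc_add_one_left_eq_Icc hk, Finset.sum_insert (by simp)]
  rfl

private lemma ME_spec (n : ℕ) (p : ℕ → ℝ) (E : ℝ) (hn : 2 ≤ n)
    (hE : E < 1 - p 1) (hsum : ∑ y ∈ Icc 1 n, p y = 1) :
    2 ≤ ME n p E ∧ ME n p E ≤ n ∧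
      (E - ∑ y ∈ Icc (ME n p E + 1) n, p y) / ((ME n p E : ℝ) - 1) < p (ME n p E) := by
  have hT1 : p 1 + ∑ y ∈ Icc 2 n, p y = 1 := by
    have h := sum_split n 1 p (by omega)
    simpa [hsum] using h
  have hT2 : ∑ y ∈ Icc 2 n, p y = p 2 + ∑ y ∈ Icc 3 n, p y := T_succ n 1 p (by omega)
  have hcond2 : (E - ∑ y ∈ Icc (2+1) n, p y) / ((2:ℕ) - 1 : ℝ) < p 2 := by
    norm_num
    linarith
  have hMn : ME n p E ≤ n := by unfold ME; exact Nat.findGreatest_le n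
  have hspec : 2 ≤ ME n p E ∧
      (E - ∑ y ∈ Icc (ME n p E + 1) n, p y) / ((ME n p E : ℝ) - 1) < p (ME n p E) := by
    unfold ME
    exact Nat.findGreatest_spec
      (P := fun m => 2 ≤ m ∧ (E - ∑ y ∈ Finset.Icc (m + 1) n, p y) / ((m : ℝ) - 1) < p m)
      hn ⟨le_rfl, hcond2⟩
  exact ⟨hspec.1, hMn, hspec.2⟩

private lemma star (n : ℕ) (p : ℕ → ℝ) (E : ℝ)
    (hdec : ∀ y ∈ Icc 1 n, ∀ z ∈ Icc 1 n, y ≤ z → p z ≤ p y)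
    (M : ℕ) (hM2 : 2 ≤ M) (hMn : M ≤ n)
    (hc : (E - ∑ y ∈ Icc (M+1) n, p y) / ((M:ℝ)-1) < p M) :
    ∀ k, 2 ≤ k → k ≤ M →
      E - ∑ y ∈ Icc (k+1) n, p y ≤ ((k:ℝ)-1) * ((E - ∑ y ∈ Icc (M+1) n, p y) / ((M:ℝ)-1)) := by
  set c := (E - ∑ y ∈ Icc (M+1) n, p y) / ((M:ℝ)-1) with hcdef
  have hM1 : (0:ℝ) < (M:ℝ) - 1 := by
    have : (2:ℝ) ≤ (M:ℝ) := by exact_mod_cast hM2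
    linarith
  have hbase : E - ∑ y ∈ Icc (M+1) n, p y = ((M:ℝ)-1) * c := by
    rw [hcdef, mul_div_cancel₀ _ (ne_of_gt hM1)]
  have key : ∀ d k, k + d = M → 2 ≤ k →
      E - ∑ y ∈ Icc (k+1) n, p y ≤ ((k:ℝ)-1) * c := by
    intro d
    induction d with
    | zero =>
      intro k hk _
      have : k = M := by omega
      subst this
      exact le_of_eq hbase
    | succ d ih =>
      intro k hkd hk2
      have hkM : k + 1 ≤ M := by omega
      have ih' := ih (k+1) (by omega) (by omega)
      have hTk : ∑ y ∈ Icc (k+1) n, p y = p (k+1) + ∑ y ∈ Icc (k+2) n, p y :=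
        T_succ n k p (by omega)
      have hpM : p M ≤ p (k+1) :=
        hdec (k+1) (by simp only [mem_Icc]; omega) M (by simp only [mem_Icc]; omega) hkM
      have hcp : c ≤ p (k+1) := le_of_lt (lt_of_lt_of_le hc hpM)
      simp only [show k+1+1 = k+2 from rfl] at ih'
      push_cast at ih' ⊢
      rw [hTk]
      linarith
  intro k hk2 hkM
  exact key (M - k) k (by omega) hk2

private lemma sum_ptilde_of_le (n : ℕ) (p : ℕ → ℝ) (E : ℝ) (hp1 : p 1 < 1 - E)
    (k : ℕ) (hk1 : 1 ≤ k) (hkM : k ≤ ME n p E) :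
    ∑ y ∈ Icc 1 k, ptilde n p E y
      = (1 - E) + ((k:ℝ)-1) *
          ((E - ∑ y ∈ Icc (ME n p E + 1) n, p y) / ((ME n p E : ℝ) - 1)) := by
  have hnle : ¬ (1 - E ≤ p 1) := not_le.mpr hp1
  rw [← Finset.insert_Icc_add_one_left_eq_Icc hk1, Finset.sum_insert (by simp),
    show (1:ℕ) + 1 = 2 from rfl]
  have h1 : ptilde n p E 1 = 1 - E := by simp [ptilde, hnle]
  have h2 : ∀ y ∈ Icc 2 k, ptilde n p E y
      = (E - ∑ y' ∈ Icc (ME n p E + 1) n, p y') / ((ME n p E : ℝ) - 1) := by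
    intro y hy
    simp only [mem_Icc] at hy
    simp [ptilde, hnle, show ¬ (y = 1) by omega, show y ≤ ME n p E by omega]
  rw [h1, Finset.sum_congr rfl h2, Finset.sum_const, Nat.card_Icc, nsmul_eq_mul]
  have hcast : ((k + 1 - 2 : ℕ) : ℝ) = (k:ℝ) - 1 := by
    have : k + 1 - 2 = k - 1 := by omega
    rw [this, Nat.cast_sub hk1]
    norm_num
  rw [hcast]

private lemma sum_ptilde_of_ge (n : ℕ) (p : ℕ → ℝ) (E : ℝ) (hp1 : p 1 < 1 - E)
    (hsum : ∑ y ∈ Icc 1 n, p y = 1) (hM2 : 2 ≤ ME n p E)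
    (k : ℕ) (hMk : ME n p E ≤ k) (hkn : k ≤ n) :
    ∑ y ∈ Icc 1 k, ptilde n p E y = ∑ y ∈ Icc 1 k, p y := by
  have hnle : ¬ (1 - E ≤ p 1) := not_le.mpr hp1
  have hMn : ME n p E ≤ n := le_trans hMk hkn
  have hM1 : (0:ℝ) < (ME n p E : ℝ) - 1 := by
    have : (2:ℝ) ≤ (ME n p E : ℝ) := by exact_mod_cast hM2
    linarith
  have hsplit := sum_split k (ME n p E) (ptilde n p E) hMk
  have hsplit' := sum_split k (ME n p E) p hMk
  have hsplitn := sum_split n (ME n p E) p hMn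
  have htail : ∀ y ∈ Icc (ME n p E + 1) k, ptilde n p E y = p y := by
    intro y hy
    simp only [mem_Icc] at hy
    simp [ptilde, hnle, show ¬ (y = 1) by omega, show ¬ (y ≤ ME n p E) by omega]
  have hhead := sum_ptilde_of_le n p E hp1 (ME n p E) (by omega) le_rfl
  have hMc : ((ME n p E : ℝ) - 1) *
      ((E - ∑ y ∈ Icc (ME n p E + 1) n, p y) / ((ME n p E : ℝ) - 1))
      = E - ∑ y ∈ Icc (ME n p E + 1) n, p y := mul_div_cancel₀ _ (ne_of_gt hM1)
  have hheadp : ∑ y ∈ Icc 1 (ME n p E), ptilde n p E y = ∑ y ∈ Icc 1 (ME n p E), p y := by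
    rw [hhead]
    have := hsplitn
    rw [hsum] at this
    linarith [hMc]
  rw [← hsplit, ← hsplit', hheadp, Finset.sum_congr rfl htail]

/-- For a decreasing probability distribution `p` on `{1,…,n}` and `0 ≤ E < E' ≤ 1 − p(1)`,
the smoothed distribution `p̃_{E'}` is majorized by `p̃_E` (both are already arranged in
decreasing order, so majorization is the comparison of partial sums). -/
theorem ptilde_majorized_of_le (n : ℕ) (p : ℕ → ℝ)
    (hnn : ∀ y ∈ Finset.Icc 1 n, 0 ≤ p y)
    (hsum : ∑ y ∈ Finset.Icc 1 n, p y = 1)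
    (hdec : ∀ y ∈ Finset.Icc 1 n, ∀ z ∈ Finset.Icc 1 n, y ≤ z → p z ≤ p y)
    (E E' : ℝ) (hE0 : 0 ≤ E) (hEE' : E < E') (hE' : E' ≤ 1 - p 1) :
    ∀ k ∈ Finset.Icc 1 n,
      ∑ y ∈ Finset.Icc 1 k, ptilde n p E' y ≤ ∑ y ∈ Finset.Icc 1 k, ptilde n p E y := by
  intro k hk
  simp only [mem_Icc] at hk
  obtain ⟨hk1, hkn⟩ := hk
  have hn1 : 1 ≤ n := le_trans hk1 hkn
  have hn2 : 2 ≤ n := by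
    by_contra h
    have hn : n = 1 := by omega
    subst hn
    simp [Finset.Icc_self] at hsum
    rw [hsum] at hE'
    linarith
  have hp1E : p 1 < 1 - E := by linarith
  obtain ⟨hM2, hMn, hMc⟩ := ME_spec n p E hn2 (by linarith) hsum
  have hM1 : (0:ℝ) < (ME n p E : ℝ) - 1 := by
    have : (2:ℝ) ≤ (ME n p E : ℝ) := by exact_mod_cast hM2
    linarith
  -- key: partial sums of p are below those of ptilde E
  have key : ∀ j, 1 ≤ j → j ≤ n →
      ∑ y ∈ Icc 1 j, p y ≤ ∑ y ∈ Icc 1 j, ptilde n p E y := by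
    intro j hj1 hjn
    rcases le_or_gt (ME n p E) j with hMj | hjM
    · rw [sum_ptilde_of_ge n p E hp1E hsum hM2 j hMj hjn]
    · rw [sum_ptilde_of_le n p E hp1E j hj1 (le_of_lt hjM)]
      rcases eq_or_lt_of_le hj1 with hj1' | hj2
      · subst hj1'
        simp
        linarith
      · have hstar := star n p E hdec (ME n p E) hM2 hMn hMc j hj2 (le_of_lt hjM)
        have hsp := sum_split n j p hjn
        rw [hsum] at hsp
        linarith
  by_cases hdeg : 1 - E' ≤ p 1
  · have heq : ∀ y ∈ Icc 1 k, ptilde n p E' y = p y := by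
      intro y _; simp [ptilde, hdeg]
    rw [Finset.sum_congr rfl heq]
    exact key k hk1 hkn
  · have hp1E' : p 1 < 1 - E' := not_le.mp hdeg
    obtain ⟨hM'2, hM'n, hM'c⟩ := ME_spec n p E' hn2 (by linarith) hsum
    have hM'1 : (0:ℝ) < (ME n p E' : ℝ) - 1 := by
      have : (2:ℝ) ≤ (ME n p E' : ℝ) := by exact_mod_cast hM'2
      linarith
    -- M' ≤ M
    have hM'M : ME n p E' ≤ ME n p E := by
      have hlt : (E - ∑ y ∈ Icc (ME n p E' + 1) n, p y) / ((ME n p E' : ℝ) - 1)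
          < (E' - ∑ y ∈ Icc (ME n p E' + 1) n, p y) / ((ME n p E' : ℝ) - 1) :=
        (div_lt_div_iff_of_pos_right hM'1).mpr (by linarith)
      have hP : 2 ≤ ME n p E' ∧ (E - ∑ y ∈ Icc (ME n p E' + 1) n, p y) /
          ((ME n p E' : ℝ) - 1) < p (ME n p E') := ⟨hM'2, lt_trans hlt hM'c⟩
      conv_rhs => unfold ME
      exact Nat.le_findGreatest hM'n hP
    rcases lt_or_ge (ME n p E') k with hM'k | hkM'
    · rw [sum_ptilde_of_ge n p E' hp1E' hsum hM'2 k (le_of_lt hM'k) hkn]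
      exact key k hk1 hkn
    · have hkM : k ≤ ME n p E := le_trans hkM' hM'M
      rw [sum_ptilde_of_le n p E' hp1E' k hk1 hkM', sum_ptilde_of_le n p E hp1E k hk1 hkM]
      rcases eq_or_lt_of_le hk1 with h1 | hk2
      · rw [← h1]
        norm_num
        linarith
      · have hA := star n p E hdec (ME n p E) hM2 hMn hMc (ME n p E') hM'2 hM'M
        set c := (E - ∑ y ∈ Icc (ME n p E + 1) n, p y) / ((ME n p E : ℝ) - 1) with hc
        have hk1R : (0:ℝ) ≤ (k:ℝ) - 1 := by
          have : (1:ℝ) ≤ (k:ℝ) := by exact_mod_cast hk1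
          linarith
        have hkM'R : (k:ℝ) ≤ (ME n p E' : ℝ) := by exact_mod_cast hkM'
        have h1 : ((k:ℝ)-1) * ((E' - ∑ y ∈ Icc (ME n p E' + 1) n, p y) /
            ((ME n p E' : ℝ) - 1)) ≤ (E' - E) + ((k:ℝ)-1) * c := by
          rw [← mul_div_assoc, div_le_iff₀ hM'1]
          have hx1 : ((k:ℝ)-1) * (E - ∑ y ∈ Icc (ME n p E' + 1) n, p y)
              ≤ ((k:ℝ)-1) * (((ME n p E' : ℝ)-1) * c) := mul_le_mul_of_nonneg_left hA hk1R
          have hx2 : ((k:ℝ)-1) * (E' - E) ≤ ((ME n p E' : ℝ)-1) * (E' - E) :=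
            mul_le_mul_of_nonneg_right (by linarith) (by linarith)
          nlinarith [hx1, hx2]
        linarith
end

section
/- With p̃_E defined as the smoothed version of a decreasing probability distribution p↓ (p̃_E(1) = 1−E, flat value on positions 2 through M_E, equal to p↓ beyond M_E), the Shannon entropy S(p̃_E) is strictly increasing in E on the interval [0, 1 − p↓(1)]. -/
open Finset

/- ## Auxiliary lemmas -/

lemma head_sum (g : ℕ → ℝ) {a n : ℕ} (h : a ≤ n) :
    g a + ∑ y ∈ Finset.Icc (a+1) n, g y = ∑ y ∈ Finset.Icc a n, g y := by
  rw [Finset.Icc_add_one_left_eq_Ioc, ← Finset.Icc_erase_left]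
  exact Finset.add_sum_erase _ g (Finset.mem_Icc.2 ⟨le_refl a, h⟩)

lemma split_sum (g : ℕ → ℝ) {a b n : ℕ} (hab : a ≤ b) (hbn : b ≤ n) :
    ∑ y ∈ Finset.Icc (a+1) b, g y + ∑ y ∈ Finset.Icc (b+1) n, g y
      = ∑ y ∈ Finset.Icc (a+1) n, g y := by
  rw [Finset.Icc_add_one_left_eq_Ioc, Finset.Icc_add_one_left_eq_Ioc, Finset.Icc_add_one_left_eq_Ioc]
  exact Finset.sum_Ioc_consecutive g hab hbn

lemma head_sum1 (g : ℕ → ℝ) {n : ℕ} (h : 1 ≤ n) :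
    ∑ y ∈ Finset.Icc 1 n, g y = g 1 + ∑ y ∈ Finset.Icc 2 n, g y := by
  rw [← head_sum g h]

lemma split_sum2 (g : ℕ → ℝ) {b n : ℕ} (h1 : 1 ≤ b) (h2 : b ≤ n) :
    ∑ y ∈ Finset.Icc 2 n, g y = ∑ y ∈ Finset.Icc 2 b, g y + ∑ y ∈ Finset.Icc (b+1) n, g y := by
  have h := split_sum g h1 h2
  norm_num at h
  exact h.symm

lemma slope_aux {a b c d : ℝ} (ha : 0 ≤ a) (hab : a < b) (hbc : b ≤ c) (hcd : c < d) :
    (Real.negMulLog d - Real.negMulLog c) * (b - a) <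
    (Real.negMulLog b - Real.negMulLog a) * (d - c) := by
  have hb : (0:ℝ) ≤ b := ha.trans hab.le
  have hc0 : (0:ℝ) ≤ c := hb.trans hbc
  have hd0 : (0:ℝ) ≤ d := hc0.trans hcd.le
  have H := Real.strictConcaveOn_negMulLog
  have key : (Real.negMulLog d - Real.negMulLog c)/(d - c)
      < (Real.negMulLog b - Real.negMulLog a)/(b - a) := by
    rcases eq_or_lt_of_le hbc with rfl | hbc'
    · exact H.slope_anti_adjacent (Set.mem_Ici.2 ha) (Set.mem_Ici.2 hd0) hab hcd
    · have h1 : (Real.negMulLog c - Real.negMulLog b)/(c - b)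
          < (Real.negMulLog b - Real.negMulLog a)/(b - a) :=
        H.slope_anti_adjacent (Set.mem_Ici.2 ha) (Set.mem_Ici.2 hc0) hab hbc'
      have h2 : (Real.negMulLog d - Real.negMulLog c)/(d - c)
          ≤ (Real.negMulLog c - Real.negMulLog b)/(c - b) :=
        Real.concaveOn_negMulLog.slope_anti_adjacent (Set.mem_Ici.2 hb) (Set.mem_Ici.2 hd0)
          hbc' hcd
      exact h2.trans_lt h1
  rw [div_lt_div_iff₀ (by linarith) (by linarith)] at key
  exact key

lemma ME_cond_two (n : ℕ) (p : ℕ → ℝ)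
    (hsum : ∑ y ∈ Finset.Icc 1 n, p y = 1) (hn2 : 2 ≤ n)
    {e : ℝ} (he : e < 1 - p 1) :
    2 ≤ 2 ∧ (e - ∑ y ∈ Finset.Icc (2 + 1) n, p y) / (((2:ℕ) : ℝ) - 1) < p 2 := by
  refine ⟨le_refl 2, ?_⟩
  have h1 : p 1 + ∑ y ∈ Finset.Icc 2 n, p y = ∑ y ∈ Finset.Icc 1 n, p y := head_sum p (by omega)
  have h2 : p 2 + ∑ y ∈ Finset.Icc 3 n, p y = ∑ y ∈ Finset.Icc 2 n, p y := head_sum p (by omega)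
  have h4 : (((2:ℕ):ℝ) - 1) = 1 := by norm_num
  rw [h4, div_one]
  have h3 : (3:ℕ) = 2 + 1 := rfl
  rw [← h3]
  linarith

lemma ME_props (n : ℕ) (p : ℕ → ℝ)
    (hnn : ∀ y ∈ Finset.Icc 1 n, 0 ≤ p y)
    (hsum : ∑ y ∈ Finset.Icc 1 n, p y = 1)
    (hn2 : 2 ≤ n) (e : ℝ) (he0 : 0 ≤ e) (he : e < 1 - p 1) :
    2 ≤ ME n p e ∧ ME n p e ≤ n ∧
    (e - ∑ y ∈ Finset.Icc (ME n p e + 1) n, p y) / ((ME n p e : ℝ) - 1) < p (ME n p e) ∧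
    0 ≤ (e - ∑ y ∈ Finset.Icc (ME n p e + 1) n, p y) / ((ME n p e : ℝ) - 1) ∧
    (ME n p e < n →
      p (ME n p e + 1) ≤ (e - ∑ y ∈ Finset.Icc (ME n p e + 1) n, p y) / ((ME n p e : ℝ) - 1)) := by
  classical
  have hcond2 := ME_cond_two n p hsum hn2 he
  set P : ℕ → Prop := fun m =>
    2 ≤ m ∧ (e - ∑ y ∈ Finset.Icc (m + 1) n, p y) / ((m : ℝ) - 1) < p m with hP
  have hME : ME n p e = Nat.findGreatest P n := rfl
  have hM2 : 2 ≤ ME n p e := Nat.le_findGreatest hn2 hcond2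
  have hMn : ME n p e ≤ n := Nat.findGreatest_le n
  have hspec : P (ME n p e) := by
    rw [hME]; exact Nat.findGreatest_spec (m := 2) hn2 hcond2
  rw [hP] at hspec
  set M := ME n p e with hMdef
  have hM1R : (0:ℝ) < (M : ℝ) - 1 := by
    have : (2:ℝ) ≤ (M:ℝ) := by exact_mod_cast hM2
    linarith
  have hnext : M < n →
      p (M + 1) ≤ (e - ∑ y ∈ Finset.Icc (M + 1) n, p y) / ((M : ℝ) - 1) := by
    intro hlt
    have hng : ¬ P (M + 1) :=
      Nat.findGreatest_is_greatest (by rw [← hME]; omega) (by omega)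
    rw [hP] at hng
    simp only at hng
    push_neg at hng
    have hge' := hng (by omega)
    have hcast : ((M + 1 : ℕ) : ℝ) - 1 = (M : ℝ) := by push_cast; ring
    rw [hcast] at hge'
    simp only [show M + 1 + 1 = M + 2 from rfl] at hge'
    have hMpos : (0:ℝ) < (M:ℝ) := by linarith
    rw [le_div_iff₀ hMpos] at hge'
    have hsplit : p (M+1) + ∑ y ∈ Finset.Icc (M+2) n, p y = ∑ y ∈ Finset.Icc (M+1) n, p y :=
      head_sum p (by omega)
    rw [le_div_iff₀ hM1R]
    nlinarith [hge', hsplit]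
  have hf0 : 0 ≤ (e - ∑ y ∈ Finset.Icc (M + 1) n, p y) / ((M : ℝ) - 1) := by
    rcases eq_or_lt_of_le hMn with heq | hlt
    · have h5 : Finset.Icc (M+1) n = ∅ := by
        rw [heq]; exact Finset.Icc_eq_empty (by omega)
      rw [h5]
      simp only [Finset.sum_empty, sub_zero]
      positivity
    · have h1 := hnext hlt
      have h2 : 0 ≤ p (M+1) := hnn _ (Finset.mem_Icc.2 ⟨by omega, by omega⟩)
      exact h2.trans h1
  exact ⟨hM2, hMn, hspec.2, hf0, hnext⟩

lemma ME_anti (n : ℕ) (p : ℕ → ℝ) {e e' : ℝ} (h : e ≤ e') :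
    ME n p e' ≤ ME n p e := by
  classical
  apply Nat.findGreatest_mono_left
  intro m hm
  refine ⟨hm.1, lt_of_le_of_lt ?_ hm.2⟩
  have hm1 : (0:ℝ) < (m:ℝ) - 1 := by
    have : (2:ℝ) ≤ (m:ℝ) := by exact_mod_cast hm.1
    linarith
  apply div_le_div_of_nonneg_right ?_ hm1.le
  linarith

/-- For a decreasing probability distribution `p` on `{1,…,n}`, the Shannon entropy of the
smoothed distribution `p̃_E` is strictly increasing in `E` on `[0, 1 − p(1)]`. -/
theorem ent_ptilde_strictMono (n : ℕ) (p : ℕ → ℝ)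
    (hnn : ∀ y ∈ Finset.Icc 1 n, 0 ≤ p y)
    (hsum : ∑ y ∈ Finset.Icc 1 n, p y = 1)
    (hdec : ∀ y ∈ Finset.Icc 1 n, ∀ z ∈ Finset.Icc 1 n, y ≤ z → p z ≤ p y)
    (E E' : ℝ) (hE0 : 0 ≤ E) (hEE' : E < E') (hE' : E' ≤ 1 - p 1) :
    ent n (ptilde n p E) < ent n (ptilde n p E') := by
  classical
  -- `n ≥ 2`
  have hn2 : 2 ≤ n := by
    by_contra h
    push_neg at h
    interval_cases n
    · simp at hsum
    · simp at hsum
      have h1 : 0 ≤ p 1 := hnn 1 (by simp)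
      linarith
  have hp1 : 0 ≤ p 1 := hnn 1 (Finset.mem_Icc.2 ⟨le_refl 1, by omega⟩)
  have hE1 : E < 1 - p 1 := lt_of_lt_of_le hEE' hE'
  have hE'0 : 0 ≤ E' := hE0.trans hEE'.le
  obtain ⟨hM2, hMn, hfM, hf0, hnexts⟩ := ME_props n p hnn hsum hn2 E hE0 hE1
  set M := ME n p E with hMdef
  set TM := ∑ y ∈ Finset.Icc (M+1) n, p y with hTM
  set f := (E - TM)/((M:ℝ)-1) with hf
  have hM1R : (0:ℝ) < (M : ℝ) - 1 := by
    have : (2:ℝ) ≤ (M:ℝ) := by exact_mod_cast hM2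
    linarith
  -- values of `q = ptilde n p E`
  have hq1 : ptilde n p E 1 = 1 - E := by
    simp [ptilde, show ¬ (1 - E ≤ p 1) by linarith]
  have hqflat : ∀ y, 2 ≤ y → y ≤ M → ptilde n p E y = f := by
    intro y h2 hy
    simp only [ptilde]
    rw [if_neg (by linarith), if_neg (by omega), if_pos (show y ≤ ME n p E from hMdef ▸ hy)]
  have hqtail : ∀ y, M < y → ptilde n p E y = p y := by
    intro y hy
    simp only [ptilde]
    rw [if_neg (by linarith), if_neg (by omega),
      if_neg (show ¬ y ≤ ME n p E by rw [← hMdef]; omega)]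
  -- unified facts about `r = ptilde n p E'`
  obtain ⟨hr1, hrflat, hrtail, hrsum⟩ :
      (ptilde n p E' 1 = 1 - E') ∧
      (∀ y, 2 ≤ y → y ≤ M → f < ptilde n p E' y ∧ ptilde n p E' y ≤ 1 - E') ∧
      (∀ y, M < y → ptilde n p E' y = p y) ∧
      (∑ y ∈ Finset.Icc 2 M, ptilde n p E' y = E' - TM) := by
    by_cases hB : 1 - E' ≤ p 1
    · -- endpoint case : `ptilde n p E' = p`
      have hpr : ∀ y, ptilde n p E' y = p y := fun y => by
        simp only [ptilde]; rw [if_pos hB]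
      have hp1E : p 1 = 1 - E' := le_antisymm (by linarith) hB
      refine ⟨by rw [hpr, hp1E], ?_, fun y _ => hpr y, ?_⟩
      · intro y h2 hy
        have hyn : y ≤ n := le_trans hy hMn
        have hymem : y ∈ Finset.Icc 1 n := Finset.mem_Icc.2 ⟨by omega, hyn⟩
        have hMmem : M ∈ Finset.Icc 1 n := Finset.mem_Icc.2 ⟨by omega, hMn⟩
        have h1mem : (1:ℕ) ∈ Finset.Icc 1 n := Finset.mem_Icc.2 ⟨le_refl 1, by omega⟩
        refine ⟨?_, ?_⟩
        · rw [hpr]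
          exact lt_of_lt_of_le hfM (hdec y hymem M hMmem hy)
        · rw [hpr, ← hp1E]
          exact hdec 1 h1mem y hymem (by omega)
      · have h1 : p 1 + ∑ y ∈ Finset.Icc 2 n, p y = 1 := by
          rw [head_sum1 p (by omega : 1 ≤ n)] at hsum
          linarith
        have h2 : ∑ y ∈ Finset.Icc 2 M, p y + TM = ∑ y ∈ Finset.Icc 2 n, p y := by
          rw [hTM, split_sum2 p (by omega : 1 ≤ M) hMn]
        have h3 : ∑ y ∈ Finset.Icc 2 M, ptilde n p E' y = ∑ y ∈ Finset.Icc 2 M, p y :=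
          Finset.sum_congr rfl (fun y _ => hpr y)
        rw [h3]
        linarith
    · -- interior case
      push_neg at hB
      have hE'1 : E' < 1 - p 1 := by linarith
      obtain ⟨hM'2, hM'n, hfM', hf'0, hnext'⟩ := ME_props n p hnn hsum hn2 E' hE'0 hE'1
      set M' := ME n p E' with hM'def
      set TM' := ∑ y ∈ Finset.Icc (M'+1) n, p y with hTM'
      set f' := (E' - TM')/((M':ℝ)-1) with hf'
      have hM'M : M' ≤ M := by rw [hMdef, hM'def]; exact ME_anti n p hEE'.le
      have hM'1R : (0:ℝ) < (M' : ℝ) - 1 := by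
        have : (2:ℝ) ≤ (M':ℝ) := by exact_mod_cast hM'2
        linarith
      have hr1 : ptilde n p E' 1 = 1 - E' := by
        simp [ptilde, show ¬ (1 - E' ≤ p 1) by linarith]
      have hrmid : ∀ y, 2 ≤ y → y ≤ M' → ptilde n p E' y = f' := by
        intro y h2 hy
        simp only [ptilde]
        rw [if_neg (by linarith), if_neg (by omega), if_pos (show y ≤ ME n p E' from hM'def ▸ hy)]
      have hrtail : ∀ y, M' < y → ptilde n p E' y = p y := by
        intro y hy
        simp only [ptilde]
        rw [if_neg (by linarith), if_neg (by omega),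
          if_neg (show ¬ y ≤ ME n p E' by rw [← hM'def]; omega)]
      have hM'mem : M' ∈ Finset.Icc 1 n := Finset.mem_Icc.2 ⟨by omega, hM'n⟩
      have hMmem : M ∈ Finset.Icc 1 n := Finset.mem_Icc.2 ⟨by omega, hMn⟩
      have h1mem : (1:ℕ) ∈ Finset.Icc 1 n := Finset.mem_Icc.2 ⟨le_refl 1, by omega⟩
      have hff' : f < f' := by
        rcases eq_or_lt_of_le hM'M with heq | hlt
        · have hTT : TM' = TM := by rw [hTM', hTM, heq]
          rw [hf, hf', heq, hTT, div_lt_div_iff₀ hM1R hM1R]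
          nlinarith [hM1R, hEE']
        · have h1 : p (M'+1) ≤ f' := hnext' (lt_of_lt_of_le hlt hMn)
          have h2 : p M ≤ p (M'+1) :=
            hdec (M'+1) (Finset.mem_Icc.2 ⟨by omega, by omega⟩) M hMmem (by omega)
          linarith
      have hf'top : f' < 1 - E' := by
        have h1 : p M' ≤ p 1 := hdec 1 h1mem M' hM'mem (by omega)
        linarith
      refine ⟨hr1, ?_, ?_, ?_⟩
      · intro y h2 hy
        rcases le_or_gt y M' with hle | hgt
        · rw [hrmid y h2 hle]; exact ⟨hff', hf'top.le⟩
        · rw [hrtail y hgt]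
          have hymem : y ∈ Finset.Icc 1 n := Finset.mem_Icc.2 ⟨by omega, le_trans hy hMn⟩
          refine ⟨lt_of_lt_of_le hfM (hdec y hymem M hMmem hy), ?_⟩
          have := hdec 1 h1mem y hymem (by omega)
          linarith
      · intro y hy; exact hrtail y (lt_of_le_of_lt hM'M hy)
      · have hsplit : ∑ y ∈ Finset.Icc 2 M, ptilde n p E' y
            = ∑ y ∈ Finset.Icc 2 M', ptilde n p E' y
              + ∑ y ∈ Finset.Icc (M'+1) M, ptilde n p E' y :=
          split_sum2 _ (by omega : 1 ≤ M') hM'M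
        have hconst : ∑ y ∈ Finset.Icc 2 M', ptilde n p E' y = ((M':ℝ) - 1) * f' := by
          rw [Finset.sum_congr rfl (fun y hy => hrmid y (Finset.mem_Icc.1 hy).1 (Finset.mem_Icc.1 hy).2)]
          rw [Finset.sum_const, nsmul_eq_mul, Nat.card_Icc]
          congr 1
          have : M' + 1 - 2 = M' - 1 := by omega
          rw [this]
          push_cast [Nat.cast_sub (by omega : 1 ≤ M')]
          ring
        have hmidp : ∑ y ∈ Finset.Icc (M'+1) M, ptilde n p E' y
            = ∑ y ∈ Finset.Icc (M'+1) M, p y :=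
          Finset.sum_congr rfl (fun y hy => hrtail y (by
            have := (Finset.mem_Icc.1 hy).1; omega))
        have hTsplit : ∑ y ∈ Finset.Icc (M'+1) M, p y + TM = TM' := by
          rw [hTM', hTM]; exact split_sum p hM'M hMn
        have hfe' : ((M':ℝ) - 1) * f' = E' - TM' := by
          rw [hf', mul_comm, div_mul_cancel₀ _ (ne_of_gt hM'1R)]
        rw [hsplit, hconst, hmidp, hfe']
        linarith
  -- the key strict inequality
  have hEe : (0:ℝ) < E' - E := by linarith
  have hne : (Finset.Icc 2 M).Nonempty := ⟨2, Finset.mem_Icc.2 ⟨le_refl 2, hM2⟩⟩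
  have hcard : ((Finset.Icc 2 M).card : ℝ) = (M:ℝ) - 1 := by
    rw [Nat.card_Icc]
    have h5 : M + 1 - 2 = M - 1 := by omega
    rw [h5]
    push_cast [Nat.cast_sub (by omega : 1 ≤ M)]
    ring
  have hfe : ((M:ℝ) - 1) * f = E - TM := by
    rw [hf, mul_comm, div_mul_cancel₀ _ (ne_of_gt hM1R)]
  have hΔ : ∑ y ∈ Finset.Icc 2 M, (ptilde n p E' y - f) = E' - E := by
    rw [Finset.sum_sub_distrib, hrsum, Finset.sum_const, nsmul_eq_mul, hcard, hfe]
    ring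
  have hterm : ∀ y ∈ Finset.Icc 2 M,
      (Real.negMulLog (1-E) - Real.negMulLog (1-E')) * (ptilde n p E' y - f)
      < (Real.negMulLog (ptilde n p E' y) - Real.negMulLog f) * ((1-E) - (1-E')) := by
    intro y hy
    obtain ⟨h2, hyM⟩ := Finset.mem_Icc.1 hy
    obtain ⟨hlow, hhigh⟩ := hrflat y h2 hyM
    exact slope_aux hf0 hlow hhigh (by linarith)
  have hkey := Finset.sum_lt_sum_of_nonempty hne hterm
  rw [← Finset.mul_sum, hΔ, ← Finset.sum_mul] at hkey
  have hEe2 : (1-E) - (1-E') = E' - E := by ring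
  rw [hEe2] at hkey
  have hkey2 : Real.negMulLog (1-E) - Real.negMulLog (1-E')
      < ∑ y ∈ Finset.Icc 2 M,
          (Real.negMulLog (ptilde n p E' y) - Real.negMulLog f) :=
    lt_of_mul_lt_mul_right (by linarith [hkey]) (by linarith : (0:ℝ) ≤ E' - E)
  -- entropy as a sum of `negMulLog`
  have hentform : ∀ g : ℕ → ℝ, ent n g = ∑ y ∈ Finset.Icc 1 n, Real.negMulLog (g y) := by
    intro g
    rw [ent, ← Finset.sum_neg_distrib]
    exact Finset.sum_congr rfl (fun y _ => by rw [Real.negMulLog]; ring)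
  have eq1 : ∑ y ∈ Finset.Icc 2 M, Real.negMulLog (ptilde n p E y)
      = ∑ y ∈ Finset.Icc 2 M, Real.negMulLog f :=
    Finset.sum_congr rfl (fun y hy => by
      rw [hqflat y (Finset.mem_Icc.1 hy).1 (Finset.mem_Icc.1 hy).2])
  have eq2 : ∑ y ∈ Finset.Icc (M+1) n, Real.negMulLog (ptilde n p E y)
      = ∑ y ∈ Finset.Icc (M+1) n, Real.negMulLog (p y) :=
    Finset.sum_congr rfl (fun y hy => by
      rw [hqtail y (by have := (Finset.mem_Icc.1 hy).1; omega)])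
  have eq3 : ∑ y ∈ Finset.Icc (M+1) n, Real.negMulLog (ptilde n p E' y)
      = ∑ y ∈ Finset.Icc (M+1) n, Real.negMulLog (p y) :=
    Finset.sum_congr rfl (fun y hy => by
      rw [hrtail y (by have := (Finset.mem_Icc.1 hy).1; omega)])
  have entq : ent n (ptilde n p E)
      = Real.negMulLog (1-E) + ∑ y ∈ Finset.Icc 2 M, Real.negMulLog f
        + ∑ y ∈ Finset.Icc (M+1) n, Real.negMulLog (p y) := by
    rw [hentform, head_sum1 _ (by omega : 1 ≤ n),
      split_sum2 _ (by omega : 1 ≤ M) hMn, hq1, eq1, eq2]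
    ring
  have entr : ent n (ptilde n p E')
      = Real.negMulLog (1-E')
        + ∑ y ∈ Finset.Icc 2 M, Real.negMulLog (ptilde n p E' y)
        + ∑ y ∈ Finset.Icc (M+1) n, Real.negMulLog (p y) := by
    rw [hentform, head_sum1 _ (by omega : 1 ≤ n),
      split_sum2 _ (by omega : 1 ≤ M) hMn, hr1, eq3]
    ring
  have hsub : ∑ y ∈ Finset.Icc 2 M,
      (Real.negMulLog (ptilde n p E' y) - Real.negMulLog f)
      = ∑ y ∈ Finset.Icc 2 M, Real.negMulLog (ptilde n p E' y)
        - ∑ y ∈ Finset.Icc 2 M, Real.negMulLog f := Finset.sum_sub_distrib _ _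
  rw [hsub] at hkey2
  rw [entq, entr]
  linarith
end

section
/- (Achievable Fano inequality, bound part) Let p^{XY} be a joint probability distribution on {1,...,n}×{1,...,n} with Y-marginal p^Y, and let E = ∑_{x≠y} p^{XY}(x,y) be the error probability. Then the conditional Shannon entropy S^{Y|X} = ∑_x p^X(x) S(p^{Y|x}) satisfies S^{Y|X} ≤ S(p̃_E^Y), where p̃_E^Y is the smoothed distribution constructed from p^Y and E. -/
open Finset

-- Marginal on `X` of a joint distribution `r` on `{1,…,n}²`.
noncomputable def pXof (n : ℕ) (r : ℕ → ℕ → ℝ) (x : ℕ) : ℝ :=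
  ∑ y ∈ Finset.Icc 1 n, r x y

-- Conditional Shannon entropy `S^{Y|X} = ∑_x p^X(x) S(p^{Y|x})` of a joint distribution,
-- with `p^{Y|x}(y) = r(x,y)/p^X(x)` (terms with `p^X(x) = 0` contribute zero).
noncomputable def condEnt (n : ℕ) (r : ℕ → ℕ → ℝ) : ℝ :=
  ∑ x ∈ Finset.Icc 1 n, pXof n r x *
    (-∑ y ∈ Finset.Icc 1 n, (r x y / pXof n r x) * Real.log (r x y / pXof n r x))

-- The error probability `E = ∑_{x ≠ y} r(x,y)`.
noncomputable def errProb (n : ℕ) (r : ℕ → ℕ → ℝ) : ℝ :=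
  ∑ x ∈ Finset.Icc 1 n, ∑ y ∈ Finset.Icc 1 n, if x = y then 0 else r x y

/-!
Let `r j` be the sum over `x` of the `j`-th largest entry of the row `q x ·`. Gibbs'
inequality, applied row by row with reference distribution `r`, gives `S^{Y|X} ≤ S(r)`.
The distribution `r` is decreasing, `r 1` is at least the diagonal mass `1 - E`, and, because
the `k` largest entries of a row outweigh any `k` of its entries, the partial sums of `r`
dominate those of `p↓^Y`. The smoothed distribution `p̃_E^Y` is decreasing and is built so that
its partial sums are dominated by those of every such `r`; Schur concavity of the entropy
(a tangent-line bound followed by Abel summation) then gives `S(r) ≤ S(p̃_E^Y)`.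
-/

open Real

lemma mul_log_sub_mul_log_le {a b : ℝ} (ha : 0 ≤ a) (hb : 0 < b) :
    a * log b - a * log a ≤ b - a := by
  rcases ha.eq_or_lt with rfl | ha
  · simpa using hb.le
  · have h := mul_le_mul_of_nonneg_left (log_le_sub_one_of_pos (div_pos hb ha)) ha.le
    rw [log_div hb.ne' ha.ne', mul_sub, mul_sub, mul_div_cancel₀ _ ha.ne'] at h
    linarith

theorem gibbs_inequality {ι : Type*} (s : Finset ι) {u v : ι → ℝ} (hu : ∀ j ∈ s, 0 ≤ u j)
    (huv : ∀ j ∈ s, u j ≤ v j) (hv : ∑ j ∈ s, v j ≤ 1) :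
    (∑ i ∈ s, u i) * -∑ j ∈ s, u j / (∑ i ∈ s, u i) * log (u j / ∑ i ∈ s, u i) ≤
      -∑ j ∈ s, u j * log (v j) := by
  set c := ∑ i ∈ s, u i
  have hc : 0 ≤ c := sum_nonneg hu
  -- with the conventions `x / 0 = 0` and `log 0 = 0` this also holds for `c = 0`
  have hnorm : ∀ j, c * (u j / c * log (u j / c)) = u j * log (u j / c) := by
    intro j
    rcases hc.eq_or_lt with h | h
    · simp [← h]
    · field_simp
  have hterm : ∀ j ∈ s, u j * log (v j) - u j * log (u j / c) ≤ c * v j - u j := by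
    intro j hj
    rcases (hu j hj).eq_or_lt with h | h
    · rw [← h]; simpa using mul_nonneg hc ((hu j hj).trans (huv j hj))
    · have hcj : 0 < c := h.trans_le (single_le_sum hu hj)
      have hvj : 0 < v j := h.trans_le (huv j hj)
      have := mul_log_sub_mul_log_le h.le (mul_pos hcj hvj)
      rw [log_mul hcj.ne' hvj.ne'] at this
      rw [log_div h.ne' hcj.ne']
      linarith
  have hsum := sum_le_sum hterm
  rw [sum_sub_distrib, sum_sub_distrib, ← mul_sum] at hsum
  rw [mul_neg, mul_sum, sum_congr rfl fun j _ => hnorm j]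
  nlinarith

theorem sum_Icc_mul_le_of_antitoneOn {d L : ℕ → ℝ} {n : ℕ}
    (hd : ∀ k ≤ n, 0 ≤ ∑ j ∈ Icc 1 k, d j) (hL : AntitoneOn L (Set.Icc 1 n)) :
    (∑ j ∈ Icc 1 n, d j) * L n ≤ ∑ j ∈ Icc 1 n, d j * L j := by
  induction n with
  | zero => simp
  | succ n ih =>
    rw [sum_Icc_succ_top (by omega), sum_Icc_succ_top (by omega), add_mul]
    have ih' := ih (fun k hk => hd k (by omega)) (hL.mono (Set.Icc_subset_Icc_right (by omega)))
    have hstep : (∑ j ∈ Icc 1 n, d j) * L (n + 1) ≤ (∑ j ∈ Icc 1 n, d j) * L n := by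
      rcases n.eq_zero_or_pos with rfl | hn
      · simp
      · exact mul_le_mul_of_nonneg_left (hL ⟨hn, by omega⟩ ⟨by omega, le_rfl⟩ (by omega))
          (hd n (by omega))
    linarith

lemma sum_Icc_eq_add_sum_Ioc (f : ℕ → ℝ) {m n : ℕ} (h : m ≤ n) :
    ∑ j ∈ Icc 1 n, f j = ∑ j ∈ Icc 1 m, f j + ∑ j ∈ Ioc m n, f j := by
  have hIoc (k : ℕ) : Icc 1 k = Ioc 0 k := Icc_add_one_left_eq_Ioc 0 k
  rw [hIoc, hIoc, sum_Ioc_consecutive f (Nat.zero_le m) h]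

lemma sum_Icc_eq_add_sum_Ioc_self (f : ℕ → ℝ) {a b : ℕ} (h : a ≤ b) :
    ∑ j ∈ Icc a b, f j = f a + ∑ j ∈ Ioc a b, f j := by
  rw [Icc_eq_cons_Ioc h, sum_cons]

lemma ent_eq_ent_of_eq_zero {m n : ℕ} {f : ℕ → ℝ} (h : m ≤ n) (hf : ∀ j ∈ Ioc m n, f j = 0) :
    ent n f = ent m f := by
  rw [ent, ent, sum_Icc_eq_add_sum_Ioc _ h,
    sum_eq_zero (s := Ioc m n) fun j hj => by simp [hf j hj], add_zero]

theorem ent_le_ent_of_sum_Icc_le_of_pos {n : ℕ} {r s : ℕ → ℝ}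
    (hr : ∀ j ∈ Icc 1 n, 0 ≤ r j) (hs : ∀ j ∈ Icc 1 n, 0 < s j)
    (hs_anti : AntitoneOn s (Set.Icc 1 n)) (hsum : ∑ j ∈ Icc 1 n, r j = ∑ j ∈ Icc 1 n, s j)
    (hpre : ∀ k ≤ n, ∑ j ∈ Icc 1 k, s j ≤ ∑ j ∈ Icc 1 k, r j) :
    ent n r ≤ ent n s := by
  have tangent := sum_le_sum fun j hj => mul_log_sub_mul_log_le (hr j hj) (hs j hj)
  rw [sum_sub_distrib, sum_sub_distrib, hsum] at tangent
  have abel := sum_Icc_mul_le_of_antitoneOn (d := fun j => r j - s j) (L := fun j => log (s j))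
    (fun k hk => by simpa [sum_sub_distrib] using hpre k hk)
    (fun j hj k hk hjk => log_le_log (hs k (mem_Icc.2 hk)) (hs_anti hj hk hjk))
  simp only [sum_sub_distrib, hsum, sub_self, zero_mul, sub_mul] at abel
  unfold ent
  linarith

theorem ent_le_ent_of_sum_Icc_le {n : ℕ} {r s : ℕ → ℝ}
    (hr : ∀ j ∈ Icc 1 n, 0 ≤ r j) (hs : ∀ j ∈ Icc 1 n, 0 ≤ s j)
    (hs_anti : AntitoneOn s (Set.Icc 1 n)) (hsum : ∑ j ∈ Icc 1 n, r j = ∑ j ∈ Icc 1 n, s j)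
    (hpre : ∀ k ≤ n, ∑ j ∈ Icc 1 k, s j ≤ ∑ j ∈ Icc 1 k, r j) :
    ent n r ≤ ent n s := by
  classical
  -- `s` vanishes exactly beyond `m`, and the prefix and total conditions force `r` to vanish there
  set m := Nat.findGreatest (fun j => 0 < s j) n with hm
  have hmn : m ≤ n := Nat.findGreatest_le n
  have hs_pos : ∀ j ∈ Icc 1 m, 0 < s j := fun j hj =>
    have hj := mem_Icc.1 hj
    (Nat.findGreatest_of_ne_zero hm.symm (by omega)).trans_le
      (hs_anti ⟨hj.1, by omega⟩ ⟨by omega, hmn⟩ hj.2)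
  have hs_zero : ∀ j ∈ Ioc m n, s j = 0 := fun j hj =>
    have hj := mem_Ioc.1 hj
    le_antisymm (not_lt.1 (Nat.findGreatest_is_greatest hj.1 hj.2))
      (hs j (mem_Icc.2 ⟨by omega, hj.2⟩))
  have hr_tail : ∀ j ∈ Ioc m n, 0 ≤ r j := fun j hj =>
    have hj := mem_Ioc.1 hj
    hr j (mem_Icc.2 ⟨by omega, hj.2⟩)
  have hr_zero : ∀ j ∈ Ioc m n, r j = 0 := by
    refine (sum_eq_zero_iff_of_nonneg hr_tail).1 (le_antisymm ?_ (sum_nonneg hr_tail))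
    have := hpre m hmn
    rw [sum_Icc_eq_add_sum_Ioc r hmn, sum_Icc_eq_add_sum_Ioc s hmn, sum_eq_zero hs_zero] at hsum
    linarith
  have hsum_m : ∑ j ∈ Icc 1 m, r j = ∑ j ∈ Icc 1 m, s j := by
    rwa [sum_Icc_eq_add_sum_Ioc r hmn, sum_Icc_eq_add_sum_Ioc s hmn, sum_eq_zero hs_zero,
      sum_eq_zero hr_zero, add_zero, add_zero] at hsum
  rw [ent_eq_ent_of_eq_zero hmn hr_zero, ent_eq_ent_of_eq_zero hmn hs_zero]
  exact ent_le_ent_of_sum_Icc_le_of_pos (fun j hj => hr j (Icc_subset_Icc_right hmn hj)) hs_pos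
    (hs_anti.mono (Set.Icc_subset_Icc_right hmn)) hsum_m (fun k hk => hpre k (hk.trans hmn))

lemma sum_comp_eq_of_bijOn {α β M : Type*} [AddCommMonoid M] {s : Finset α} {t : Finset β}
    {e : α → β} (he : Set.BijOn e s t) (f : β → M) : ∑ j ∈ s, f (e j) = ∑ y ∈ t, f y :=
  sum_nbij e (fun _ hj => he.mapsTo hj) he.injOn he.surjOn fun _ _ => rfl

lemma sum_Icc_comp_of_bijOn {M : Type*} [AddCommMonoid M] {n : ℕ} {e : ℕ → ℕ}
    (he : Set.BijOn e (Set.Icc 1 n) (Set.Icc 1 n)) (f : ℕ → M) :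
    ∑ j ∈ Icc 1 n, f (e j) = ∑ y ∈ Icc 1 n, f y :=
  sum_comp_eq_of_bijOn (by rwa [coe_Icc]) f

lemma bijOn_filter_le {n k : ℕ} {σ : ℕ → ℕ} (hσ : Set.BijOn σ (Set.Icc 1 n) (Set.Icc 1 n))
    (hk : k ≤ n) : Set.BijOn σ ({y ∈ Icc 1 n | σ y ≤ k} : Finset ℕ) (Icc 1 k) := by
  refine ⟨fun y hy => ?_, hσ.injOn.mono fun y hy => ?_, fun j hj => ?_⟩
  · simp only [coe_filter, mem_Icc, Set.mem_ofPred_eq, coe_Icc, Set.mem_Icc] at hy ⊢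
    exact ⟨(hσ.mapsTo hy.1).1, hy.2⟩
  · simp only [coe_filter, mem_Icc, Set.mem_ofPred_eq] at hy
    exact hy.1
  · simp only [coe_Icc, Set.mem_Icc] at hj
    obtain ⟨y, hy, rfl⟩ := hσ.surjOn (⟨hj.1, hj.2.trans hk⟩ : j ∈ Set.Icc 1 n)
    exact ⟨y, by simpa using ⟨hy, hj.2⟩, rfl⟩

theorem sum_le_sum_of_card_eq_of_forall_le {ι : Type*} [DecidableEq ι] {S T : Finset ι}
    {f : ι → ℝ} (hcard : #S = #T) (hdom : ∀ t ∈ T, ∀ s ∈ S \ T, f s ≤ f t) :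
    ∑ s ∈ S, f s ≤ ∑ t ∈ T, f t := by
  rw [← sum_inter_add_sum_sdiff S T, ← sum_inter_add_sum_sdiff T S, inter_comm]
  gcongr 1
  rcases (T \ S).eq_empty_or_nonempty with h | h
  · have : S \ T = ∅ := by rw [← card_eq_zero, card_sdiff_comm hcard, h, card_empty]
    simp [this, h]
  · calc ∑ s ∈ S \ T, f s ≤ #(S \ T) • (T \ S).inf' h f :=
          sum_le_card_nsmul _ _ _ fun s hs => le_inf' h _ fun t ht => hdom t (mem_sdiff.1 ht).1 s hs
      _ = #(T \ S) • (T \ S).inf' h f := by rw [card_sdiff_comm hcard]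
      _ ≤ ∑ t ∈ T \ S, f t := card_nsmul_le_sum _ _ _ fun t ht => inf'_le f ht

def permShift {n : ℕ} (τ : Equiv.Perm (Fin n)) (j : ℕ) : ℕ :=
  if h : j - 1 < n then τ ⟨j - 1, h⟩ + 1 else j

lemma permShift_mapsTo {n : ℕ} (τ : Equiv.Perm (Fin n)) :
    Set.MapsTo (permShift τ) (Set.Icc 1 n) (Set.Icc 1 n) := by
  intro j hj
  have h : j - 1 < n := Nat.sub_one_lt_of_le hj.1 hj.2
  simp only [permShift, h, dite_true, Set.mem_Icc]
  omega

lemma permShift_symm_permShift {n : ℕ} (τ : Equiv.Perm (Fin n)) {j : ℕ}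
    (hj : j ∈ Set.Icc 1 n) : permShift τ.symm (permShift τ j) = j := by
  have h : j - 1 < n := Nat.sub_one_lt_of_le hj.1 hj.2
  simp only [permShift, h, ↓reduceDIte, add_tsub_cancel_right, Fin.is_lt, Fin.eta,
    Equiv.symm_apply_apply]
  have := hj.1
  omega

theorem exists_bijOn_antitoneOn_comp (n : ℕ) (f : ℕ → ℝ) :
    ∃ e : ℕ → ℕ, Set.BijOn e (Set.Icc 1 n) (Set.Icc 1 n) ∧ AntitoneOn (f ∘ e) (Set.Icc 1 n) := by
  let g : Fin n → ℝᵒᵈ := fun i => OrderDual.toDual (f (i + 1))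
  let τ := Tuple.sort g
  refine ⟨permShift τ, Set.InvOn.bijOn (f' := permShift τ.symm)
    ⟨fun j hj => permShift_symm_permShift τ hj, fun j hj => ?_⟩
    (permShift_mapsTo τ) (permShift_mapsTo τ.symm), fun j hj k hk hjk => ?_⟩
  · simpa using permShift_symm_permShift τ.symm hj
  · have hj' : j - 1 < n := Nat.sub_one_lt_of_le hj.1 hj.2
    have hk' : k - 1 < n := Nat.sub_one_lt_of_le hk.1 hk.2
    have hjk' : (⟨j - 1, hj'⟩ : Fin n) ≤ ⟨k - 1, hk'⟩ := Fin.mk_le_mk.2 (by omega)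
    simpa [permShift, hj', hk', g] using Tuple.monotone_sort g hjk'

theorem sum_le_sum_Icc_comp_of_antitoneOn {n k : ℕ} {f : ℕ → ℝ} {e : ℕ → ℕ}
    (he : Set.BijOn e (Set.Icc 1 n) (Set.Icc 1 n)) (hfe : AntitoneOn (f ∘ e) (Set.Icc 1 n))
    {S : Finset ℕ} (hS : S ⊆ Icc 1 n) (hSk : #S = k) (hkn : k ≤ n) :
    ∑ y ∈ S, f y ≤ ∑ j ∈ Icc 1 k, f (e j) := by
  classical
  have hk : Set.Icc 1 k ⊆ Set.Icc 1 n := Set.Icc_subset_Icc_right hkn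
  have he_inj : Set.InjOn e (Icc 1 k) := by rw [coe_Icc]; exact he.injOn.mono hk
  rw [← sum_image he_inj]
  refine sum_le_sum_of_card_eq_of_forall_le (by rw [card_image_of_injOn he_inj, hSk]; simp) ?_
  intro t ht s hs
  obtain ⟨j, hj, rfl⟩ := mem_image.1 ht
  obtain ⟨hsS, hsT⟩ := mem_sdiff.1 hs
  obtain ⟨j', hj', rfl⟩ := he.surjOn (mem_Icc.1 (hS hsS))
  have hj : j ∈ Set.Icc 1 k := mem_Icc.1 hj
  have hkj' : k < j' := by
    by_contra! h
    exact hsT (mem_image.2 ⟨j', mem_Icc.2 ⟨hj'.1, h⟩, rfl⟩)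
  exact hfe (hk hj) hj' (by have := hj.2; omega)

noncomputable def sortDesc (n : ℕ) (f : ℕ → ℝ) : ℕ → ℕ :=
  (exists_bijOn_antitoneOn_comp n f).choose

lemma sortDesc_bijOn (n : ℕ) (f : ℕ → ℝ) :
    Set.BijOn (sortDesc n f) (Set.Icc 1 n) (Set.Icc 1 n) :=
  (exists_bijOn_antitoneOn_comp n f).choose_spec.1

lemma antitoneOn_comp_sortDesc (n : ℕ) (f : ℕ → ℝ) :
    AntitoneOn (f ∘ sortDesc n f) (Set.Icc 1 n) :=
  (exists_bijOn_antitoneOn_comp n f).choose_spec.2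

lemma sortDesc_mem {n : ℕ} (f : ℕ → ℝ) {j : ℕ} (hj : j ∈ Icc 1 n) : sortDesc n f j ∈ Icc 1 n :=
  mem_Icc.2 ((sortDesc_bijOn n f).mapsTo (mem_Icc.1 hj))

noncomputable def sortedRowSum (n : ℕ) (q : ℕ → ℕ → ℝ) (j : ℕ) : ℝ :=
  ∑ x ∈ Icc 1 n, q x (sortDesc n (q x) j)

section sortedRowSum

variable {n : ℕ} {q : ℕ → ℕ → ℝ}

lemma sortedRowSum_nonneg (hq0 : ∀ x ∈ Icc 1 n, ∀ y ∈ Icc 1 n, 0 ≤ q x y) :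
    ∀ j ∈ Icc 1 n, 0 ≤ sortedRowSum n q j := fun _ hj =>
  sum_nonneg fun x hx => hq0 x hx _ (sortDesc_mem _ hj)

lemma antitoneOn_sortedRowSum : AntitoneOn (sortedRowSum n q) (Set.Icc 1 n) :=
  fun _ hj _ hk hjk => sum_le_sum fun x _ => antitoneOn_comp_sortDesc n (q x) hj hk hjk

lemma sum_sortedRowSum :
    ∑ j ∈ Icc 1 n, sortedRowSum n q j = ∑ x ∈ Icc 1 n, ∑ y ∈ Icc 1 n, q x y := by
  simp only [sortedRowSum]
  rw [sum_comm]
  exact sum_congr rfl fun x _ => sum_Icc_comp_of_bijOn (sortDesc_bijOn n (q x)) (q x)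

lemma sum_diag_le_sortedRowSum_one : ∑ x ∈ Icc 1 n, q x x ≤ sortedRowSum n q 1 := by
  refine sum_le_sum fun x hx => ?_
  obtain ⟨j, hj, hjx⟩ := (sortDesc_bijOn n (q x)).surjOn (mem_Icc.1 hx)
  calc q x x = q x (sortDesc n (q x) j) := by rw [hjx]
    _ ≤ q x (sortDesc n (q x) 1) :=
      antitoneOn_comp_sortDesc n (q x) ⟨le_rfl, hj.1.trans hj.2⟩ hj hj.1

lemma sum_Icc_le_sum_Icc_sortedRowSum {pd : ℕ → ℝ} {σ : ℕ → ℕ}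
    (hσ : Set.BijOn σ (Set.Icc 1 n) (Set.Icc 1 n))
    (hsort : ∀ y ∈ Icc 1 n, ∑ x ∈ Icc 1 n, q x y = pd (σ y)) {k : ℕ} (hk : k ≤ n) :
    ∑ j ∈ Icc 1 k, pd j ≤ ∑ j ∈ Icc 1 k, sortedRowSum n q j := by
  classical
  set S : Finset ℕ := {y ∈ Icc 1 n | σ y ≤ k}
  have hS : S ⊆ Icc 1 n := filter_subset _ _
  have hSσ := bijOn_filter_le hσ hk
  calc ∑ j ∈ Icc 1 k, pd j = ∑ y ∈ S, ∑ x ∈ Icc 1 n, q x y := by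
        rw [← sum_comp_eq_of_bijOn hSσ]
        exact sum_congr rfl fun y hy => (hsort y (hS hy)).symm
    _ = ∑ x ∈ Icc 1 n, ∑ y ∈ S, q x y := sum_comm
    _ ≤ ∑ x ∈ Icc 1 n, ∑ j ∈ Icc 1 k, q x (sortDesc n (q x) j) := by
        refine sum_le_sum fun x _ => sum_le_sum_Icc_comp_of_antitoneOn (sortDesc_bijOn n (q x))
          (antitoneOn_comp_sortDesc n (q x)) hS ?_ hk
        simpa using hSσ.finsetCard_eq
    _ = ∑ j ∈ Icc 1 k, sortedRowSum n q j := sum_comm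

theorem condEnt_le_ent_sortedRowSum (hq0 : ∀ x ∈ Icc 1 n, ∀ y ∈ Icc 1 n, 0 ≤ q x y)
    (hq1 : ∑ x ∈ Icc 1 n, ∑ y ∈ Icc 1 n, q x y = 1) :
    condEnt n q ≤ ent n (sortedRowSum n q) := by
  have hrow : ∀ x ∈ Icc 1 n, pXof n q x *
      -∑ y ∈ Icc 1 n, q x y / pXof n q x * log (q x y / pXof n q x) ≤
      -∑ j ∈ Icc 1 n, q x (sortDesc n (q x) j) * log (sortedRowSum n q j) := by
    intro x hx
    have he := sortDesc_bijOn n (q x)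
    have hpX : pXof n q x = ∑ j ∈ Icc 1 n, q x (sortDesc n (q x) j) :=
      (sum_Icc_comp_of_bijOn he (q x)).symm
    rw [← sum_Icc_comp_of_bijOn he, hpX]
    refine gibbs_inequality _ (fun j hj => hq0 x hx _ (sortDesc_mem _ hj))
      (fun j hj => ?_) (by rw [sum_sortedRowSum, hq1])
    exact single_le_sum (f := fun x => q x (sortDesc n (q x) j))
      (fun x' hx' => hq0 x' hx' _ (sortDesc_mem _ hj)) hx
  calc condEnt n q ≤ ∑ x ∈ Icc 1 n,
        -∑ j ∈ Icc 1 n, q x (sortDesc n (q x) j) * log (sortedRowSum n q j) := sum_le_sum hrow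
    _ = ent n (sortedRowSum n q) := by
        rw [ent, sum_neg_distrib, sum_comm]
        simp only [sortedRowSum, sum_mul]

end sortedRowSum

/-- The value of `ptilde n p E` on `{2,…,ME n p E}`. -/
noncomputable def flatValue (n : ℕ) (p : ℕ → ℝ) (E : ℝ) : ℝ :=
  (E - ∑ y ∈ Icc (ME n p E + 1) n, p y) / ((ME n p E : ℝ) - 1)

section ptilde

variable {n : ℕ} {p : ℕ → ℝ} {E : ℝ}

lemma ME_le (n : ℕ) (p : ℕ → ℝ) (E : ℝ) : ME n p E ≤ n := Nat.findGreatest_le n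

lemma not_lt_of_ME_lt {m : ℕ} (hm : ME n p E < m) (hmn : m ≤ n) :
    ¬ (2 ≤ m ∧ (E - ∑ y ∈ Icc (m + 1) n, p y) / ((m : ℝ) - 1) < p m) :=
  Nat.findGreatest_is_greatest hm hmn

lemma ptilde_of_lt (hlt : p 1 < 1 - E) (j : ℕ) :
    ptilde n p E j = if j = 1 then 1 - E else if j ≤ ME n p E then flatValue n p E else p j := by
  simp [ptilde, not_le.2 hlt, flatValue]

lemma ptilde_of_le (hle : 1 - E ≤ p 1) : ptilde n p E = p := by
  ext j
  simp [ptilde, hle]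

lemma two_le_ME (hsum : ∑ j ∈ Icc 1 n, p j = 1) (hE : 0 ≤ E) (hlt : p 1 < 1 - E) :
    2 ≤ ME n p E ∧ flatValue n p E < p (ME n p E) := by
  have hn : 2 ≤ n := by
    by_contra! h
    interval_cases n
    · simp at hsum
    · rw [Icc_self, sum_singleton] at hsum
      linarith
  -- `m = 2` qualifies in the definition of `ME`, since `E < 1 - p 1 = p 2 + ∑_{y ≥ 3} p y`
  have h2 : 2 ≤ 2 ∧ (E - ∑ y ∈ Icc (2 + 1) n, p y) / (((2 : ℕ) : ℝ) - 1) < p 2 := by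
    refine ⟨le_rfl, ?_⟩
    rw [sum_Icc_eq_add_sum_Ioc p hn, sum_Icc_succ_top one_le_two, Icc_self, sum_singleton] at hsum
    rw [Icc_add_one_left_eq_Ioc, Nat.cast_ofNat, show (2 : ℝ) - 1 = 1 by norm_num, div_one]
    linarith
  exact Nat.findGreatest_spec (P := fun m =>
    2 ≤ m ∧ (E - ∑ y ∈ Icc (m + 1) n, p y) / ((m : ℝ) - 1) < p m) hn h2

lemma p_succ_ME_le_flatValue (hsum : ∑ j ∈ Icc 1 n, p j = 1) (hE : 0 ≤ E) (hlt : p 1 < 1 - E)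
    (hMn : ME n p E < n) : p (ME n p E + 1) ≤ flatValue n p E := by
  have hM2 := (two_le_ME hsum hE hlt).1
  have hM : (2 : ℝ) ≤ ME n p E := by exact_mod_cast hM2
  have hnext := not_lt_of_ME_lt (Nat.lt_succ_self _) hMn
  simp only [not_and, not_lt] at hnext
  have key := hnext (by omega)
  push_cast at key
  rw [add_sub_cancel_right, le_div_iff₀ (by linarith)] at key
  rw [flatValue, le_div_iff₀ (by linarith), sum_Icc_eq_add_sum_Ioc_self p (by omega),
    ← Icc_add_one_left_eq_Ioc]
  linarith

lemma flatValue_nonneg (hp0 : ∀ j ∈ Icc 1 n, 0 ≤ p j) (hsum : ∑ j ∈ Icc 1 n, p j = 1)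
    (hE : 0 ≤ E) (hlt : p 1 < 1 - E) : 0 ≤ flatValue n p E := by
  rcases (ME_le n p E).lt_or_eq with h | h
  · exact (hp0 _ (mem_Icc.2 ⟨by omega, h⟩)).trans (p_succ_ME_le_flatValue hsum hE hlt h)
  · have hM : (2 : ℝ) ≤ ME n p E := by exact_mod_cast (two_le_ME hsum hE hlt).1
    rw [flatValue, h, Icc_eq_empty (by omega), sum_empty, sub_zero]
    exact div_nonneg hE (by rw [← h]; linarith)

lemma sum_Icc_ptilde_of_le_ME (hlt : p 1 < 1 - E) {k : ℕ} (hk : 1 ≤ k) (hkM : k ≤ ME n p E) :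
    ∑ j ∈ Icc 1 k, ptilde n p E j = (1 - E) + ((k : ℝ) - 1) * flatValue n p E := by
  have hflat : ∀ j ∈ Ioc 1 k, ptilde n p E j = flatValue n p E := fun j hj => by
    have := mem_Ioc.1 hj
    rw [ptilde_of_lt hlt, if_neg (by omega), if_pos (by omega)]
  rw [sum_Icc_eq_add_sum_Ioc_self _ hk, sum_congr rfl hflat, sum_const, Nat.card_Ioc,
    nsmul_eq_mul, ptilde_of_lt hlt, if_pos rfl, Nat.cast_sub hk, Nat.cast_one]

lemma sum_Icc_ptilde_of_ME_le (hsum : ∑ j ∈ Icc 1 n, p j = 1) (hE : 0 ≤ E)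
    (hlt : p 1 < 1 - E) {k : ℕ} (hMk : ME n p E ≤ k) (hkn : k ≤ n) :
    ∑ j ∈ Icc 1 k, ptilde n p E j = ∑ j ∈ Icc 1 k, p j := by
  have hM2 := (two_le_ME hsum hE hlt).1
  have hM : (2 : ℝ) ≤ ME n p E := by exact_mod_cast hM2
  rw [sum_Icc_eq_add_sum_Ioc _ hMk, sum_Icc_eq_add_sum_Ioc p hMk,
    sum_Icc_ptilde_of_le_ME hlt (by omega) le_rfl]
  congr 1
  · have hflat : ((ME n p E : ℝ) - 1) * flatValue n p E = E - ∑ y ∈ Ioc (ME n p E) n, p y := by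
      rw [flatValue, Icc_add_one_left_eq_Ioc]
      field_simp [show (ME n p E : ℝ) - 1 ≠ 0 by linarith]
    have := sum_Icc_eq_add_sum_Ioc p (hMk.trans hkn)
    linarith
  · refine sum_congr rfl fun j hj => ?_
    have := mem_Ioc.1 hj
    rw [ptilde_of_lt hlt, if_neg (by omega), if_neg (by omega)]

lemma ptilde_nonneg (hp0 : ∀ j ∈ Icc 1 n, 0 ≤ p j) (hsum : ∑ j ∈ Icc 1 n, p j = 1)
    (hE : 0 ≤ E) (hlt : p 1 < 1 - E) : ∀ j ∈ Icc 1 n, 0 ≤ ptilde n p E j := by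
  intro j hj
  rw [ptilde_of_lt hlt]
  split_ifs
  · linarith [hp0 1 (by simp only [mem_Icc] at hj ⊢; omega)]
  · exact flatValue_nonneg hp0 hsum hE hlt
  · exact hp0 j hj

lemma antitoneOn_ptilde (hp : AntitoneOn p (Set.Icc 1 n))
    (hsum : ∑ j ∈ Icc 1 n, p j = 1) (hE : 0 ≤ E) (hlt : p 1 < 1 - E) :
    AntitoneOn (ptilde n p E) (Set.Icc 1 n) := by
  obtain ⟨hM2, hflat_lt⟩ := two_le_ME hsum hE hlt
  have hMn := ME_le n p E
  have hp1 : ∀ j ∈ Set.Icc 1 n, p j < 1 - E := fun j hj =>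
    (hp ⟨le_rfl, hj.1.trans hj.2⟩ hj hj.1).trans_lt hlt
  have hflat : flatValue n p E < 1 - E := hflat_lt.trans (hp1 _ ⟨by omega, hMn⟩)
  have htail : ∀ j ∈ Set.Icc 1 n, ME n p E < j → p j ≤ flatValue n p E := fun j hj h =>
    (hp ⟨by omega, h.trans_le hj.2⟩ hj h).trans
      (p_succ_ME_le_flatValue hsum hE hlt (h.trans_le hj.2))
  intro j hj k hk hjk
  have := hj.1
  rw [ptilde_of_lt hlt, ptilde_of_lt hlt]
  split_ifs <;> first
    | omega | exact le_rfl | exact hflat.le | exact (hp1 k hk).le | exact htail k hk (by omega)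
    | exact hp hj hk hjk

lemma sum_Icc_ptilde_le (hsum : ∑ j ∈ Icc 1 n, p j = 1)
    (hE : 0 ≤ E) (hlt : p 1 < 1 - E) {r : ℕ → ℝ} (hr : AntitoneOn r (Set.Icc 1 n))
    (hr1 : 1 - E ≤ r 1) (hpre : ∀ k ≤ n, ∑ j ∈ Icc 1 k, p j ≤ ∑ j ∈ Icc 1 k, r j)
    {k : ℕ} (hkn : k ≤ n) : ∑ j ∈ Icc 1 k, ptilde n p E j ≤ ∑ j ∈ Icc 1 k, r j := by
  set c := flatValue n p E
  have hMn := ME_le n p E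
  rcases le_or_gt (ME n p E) k with hMk | hkM
  · rw [sum_Icc_ptilde_of_ME_le hsum hE hlt hMk hkn]
    exact hpre k hkn
  rcases k.eq_zero_or_pos with rfl | hk
  · simp
  have hk_mem : k ∈ Set.Icc 1 n := ⟨hk, hkn⟩
  rw [sum_Icc_ptilde_of_le_ME hlt hk hkM.le]
  rcases le_total c (r k) with hc | hc
  · -- `c ≤ r` on `Icc 1 k`, and `1 - E ≤ r 1`
    have hmid := card_nsmul_le_sum (Ioc 1 k) r c fun j hj =>
      have hj := mem_Ioc.1 hj
      hc.trans (hr ⟨by omega, by omega⟩ hk_mem hj.2)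
    rw [Nat.card_Ioc, nsmul_eq_mul, Nat.cast_sub hk, Nat.cast_one] at hmid
    rw [sum_Icc_eq_add_sum_Ioc_self r hk]
    linarith
  · -- `r ≤ c` on `Ioc k (ME n p E)`, and up to `ME n p E` the partial sums of `p̃` and `p` agree
    have hmid := sum_le_card_nsmul (Ioc k (ME n p E)) r c fun j hj =>
      have hj := mem_Ioc.1 hj
      (hr hk_mem ⟨by omega, by omega⟩ hj.1.le).trans hc
    rw [Nat.card_Ioc, nsmul_eq_mul, Nat.cast_sub hkM.le] at hmid
    have hM := hpre _ hMn
    rw [← sum_Icc_ptilde_of_ME_le hsum hE hlt le_rfl hMn,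
      sum_Icc_ptilde_of_le_ME hlt (by omega) le_rfl, sum_Icc_eq_add_sum_Ioc r hkM.le] at hM
    linarith

theorem ent_le_ent_ptilde (hp0 : ∀ j ∈ Icc 1 n, 0 ≤ p j) (hp : AntitoneOn p (Set.Icc 1 n))
    (hsum : ∑ j ∈ Icc 1 n, p j = 1) (hE : 0 ≤ E) {r : ℕ → ℝ} (hr0 : ∀ j ∈ Icc 1 n, 0 ≤ r j)
    (hr : AntitoneOn r (Set.Icc 1 n)) (hrsum : ∑ j ∈ Icc 1 n, r j = 1) (hr1 : 1 - E ≤ r 1)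
    (hpre : ∀ k ≤ n, ∑ j ∈ Icc 1 k, p j ≤ ∑ j ∈ Icc 1 k, r j) :
    ent n r ≤ ent n (ptilde n p E) := by
  by_cases hle : 1 - E ≤ p 1
  · rw [ptilde_of_le hle]
    exact ent_le_ent_of_sum_Icc_le hr0 hp0 hp (hrsum.trans hsum.symm) hpre
  · have hlt := not_le.1 hle
    refine ent_le_ent_of_sum_Icc_le hr0 (ptilde_nonneg hp0 hsum hE hlt)
      (antitoneOn_ptilde hp hsum hE hlt) ?_
      fun k hk => sum_Icc_ptilde_le hsum hE hlt hr hr1 hpre hk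
    rw [hrsum, sum_Icc_ptilde_of_ME_le hsum hE hlt (ME_le n p E) le_rfl, hsum]

end ptilde

lemma errProb_eq_sub {n : ℕ} (q : ℕ → ℕ → ℝ) :
    errProb n q = ∑ x ∈ Icc 1 n, ∑ y ∈ Icc 1 n, q x y - ∑ x ∈ Icc 1 n, q x x := by
  rw [errProb, ← sum_sub_distrib]
  refine sum_congr rfl fun x hx => ?_
  rw [← sum_erase_add _ _ hx, ← sum_erase_add _ _ hx, if_pos rfl]
  simp [sum_congr rfl fun y hy => if_neg (ne_of_mem_erase hy).symm]

lemma errProb_nonneg {n : ℕ} {q : ℕ → ℕ → ℝ}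
    (hq0 : ∀ x ∈ Icc 1 n, ∀ y ∈ Icc 1 n, 0 ≤ q x y) : 0 ≤ errProb n q :=
  sum_nonneg fun x hx => sum_nonneg fun y hy => by split_ifs <;> simp [hq0 x hx y hy]

theorem achievable_fano_bound_general (n : ℕ) (q : ℕ → ℕ → ℝ)
    (hq0 : ∀ x ∈ Finset.Icc 1 n, ∀ y ∈ Finset.Icc 1 n, 0 ≤ q x y)
    (hq1 : ∑ x ∈ Finset.Icc 1 n, ∑ y ∈ Finset.Icc 1 n, q x y = 1)
    (pd : ℕ → ℝ) (σ : ℕ → ℕ)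
    (hσ : Set.BijOn σ (Set.Icc 1 n) (Set.Icc 1 n))
    (hsort : ∀ y ∈ Finset.Icc 1 n, (∑ x ∈ Finset.Icc 1 n, q x y) = pd (σ y))
    (hdec : ∀ y ∈ Finset.Icc 1 n, ∀ z ∈ Finset.Icc 1 n, y ≤ z → pd z ≤ pd y) :
    condEnt n q ≤ ent n (ptilde n pd (errProb n q)) := by
  have hpd : AntitoneOn pd (Set.Icc 1 n) := fun y hy z hz =>
    hdec y (mem_Icc.2 hy) z (mem_Icc.2 hz)
  have hpd0 : ∀ j ∈ Icc 1 n, 0 ≤ pd j := fun j hj => by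
    obtain ⟨y, hy, rfl⟩ := hσ.surjOn (mem_Icc.1 hj)
    have hy := mem_Icc.2 hy
    exact hsort y hy ▸ sum_nonneg fun x hx => hq0 x hx y hy
  have hpd1 : ∑ j ∈ Icc 1 n, pd j = 1 := by
    rw [← sum_Icc_comp_of_bijOn hσ, ← hq1, sum_comm]
    exact sum_congr rfl fun y hy => (hsort y hy).symm
  have hr1 : 1 - errProb n q ≤ sortedRowSum n q 1 := by
    rw [errProb_eq_sub, hq1, sub_sub_cancel]
    exact sum_diag_le_sortedRowSum_one
  exact (condEnt_le_ent_sortedRowSum hq0 hq1).trans <| ent_le_ent_ptilde hpd0 hpd hpd1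
    (errProb_nonneg hq0) (sortedRowSum_nonneg hq0) antitoneOn_sortedRowSum
    (by rw [sum_sortedRowSum, hq1]) hr1 fun k hk => sum_Icc_le_sum_Icc_sortedRowSum hσ hsort hk

/-- (Achievable Fano inequality, bound part.) For a joint distribution `q` on `{1,…,n}²`
with `Y`-marginal `p^Y` (whose decreasing rearrangement is `pd`, witnessed by the
bijection `σ` of `{1,…,n}`), the conditional Shannon entropy is bounded by the entropy
of the smoothed distribution `p̃_E` built from `p^Y` and the error probability `E`. -/
theorem achievable_fano_bound (n : ℕ) (hn : 1 ≤ n) (q : ℕ → ℕ → ℝ)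
    (hq0 : ∀ x ∈ Finset.Icc 1 n, ∀ y ∈ Finset.Icc 1 n, 0 ≤ q x y)
    (hq1 : ∑ x ∈ Finset.Icc 1 n, ∑ y ∈ Finset.Icc 1 n, q x y = 1)
    (pd : ℕ → ℝ) (σ : ℕ → ℕ)
    (hσ : Set.BijOn σ (Set.Icc 1 n) (Set.Icc 1 n))
    (hsort : ∀ y ∈ Finset.Icc 1 n, (∑ x ∈ Finset.Icc 1 n, q x y) = pd (σ y))
    (hdec : ∀ y ∈ Finset.Icc 1 n, ∀ z ∈ Finset.Icc 1 n, y ≤ z → pd z ≤ pd y) :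
    condEnt n q ≤ ent n (ptilde n pd (errProb n q)) :=
  achievable_fano_bound_general n q hq0 hq1 pd σ hσ hsort hdec
end

section
/- If direct transitions from (y,y) to (x',y) are allowed for every y and x' ≠ y (condition (C), giving cost d_{(x,y),(y,y)} = 1 for all x ≠ y), then for the diagonal initial distribution p_0^{XY}(x,y) = δ_{x,y}p^Y(y) and any final distribution p_τ^{XY} with the same Y-marginal, the Wasserstein distance equals the error probability: W(p_0^{XY}, p_τ^{XY}) = E_τ = ∑_{x≠y} p_τ^{XY}(x,y). -/
open Finset

/-- Under condition (C) — direct transitions from `(y,y)` to `(x,y)` are allowed for every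
`x ≠ y`, so `d((x,y),(y,y)) = 1` — the Wasserstein distance between the diagonal initial
distribution `p₀(x,y) = δ_{x,y} p^Y(y)` and any final distribution `p_τ` with the same
`Y`-marginal equals the error probability `E_τ = ∑_{x≠y} p_τ(x,y)`: every allowed transport
plan has cost at least `E_τ`, and some allowed transport plan has cost exactly `E_τ`. -/
theorem wasserstein_eq_errProb_of_conditionC (n : ℕ) (pY : Fin n → ℝ)
    (hpY0 : ∀ y, 0 ≤ pY y) (hpY1 : ∑ y, pY y = 1)
    (pτ : Fin n → Fin n → ℝ) (hpτ0 : ∀ x y, 0 ≤ pτ x y)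
    (hmarg : ∀ y, ∑ x, pτ x y = pY y)
    (d : Fin n × Fin n → Fin n × Fin n → ℝ)
    (hd0 : ∀ z, d z z = 0) (hd1 : ∀ z z', z ≠ z' → 1 ≤ d z z')
    (hdC : ∀ x y : Fin n, x ≠ y → d (x, y) (y, y) = 1) :
    (∀ π : Fin n × Fin n → Fin n × Fin n → ℝ,
        (∀ z z', 0 ≤ π z z') →
        (∀ z z', z.2 ≠ z'.2 → π z z' = 0) →
        (∀ z', ∑ z, π z z' = if z'.1 = z'.2 then pY z'.2 else 0) →
        (∀ z, ∑ z', π z z' = pτ z.1 z.2) →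
        (∑ x, ∑ y, if x = y then 0 else pτ x y) ≤ ∑ z, ∑ z', d z z' * π z z') ∧
      (∃ π : Fin n × Fin n → Fin n × Fin n → ℝ,
        (∀ z z', 0 ≤ π z z') ∧
        (∀ z z', z.2 ≠ z'.2 → π z z' = 0) ∧
        (∀ z', ∑ z, π z z' = if z'.1 = z'.2 then pY z'.2 else 0) ∧
        (∀ z, ∑ z', π z z' = pτ z.1 z.2) ∧
        (∑ z, ∑ z', d z z' * π z z') = ∑ x, ∑ y, if x = y then 0 else pτ x y) := by
  constructor
  · intro π hπ0 hslice hcol hrow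
    have hzero : ∀ z z' : Fin n × Fin n, z' ≠ (z.2, z.2) → π z z' = 0 := by
      intro z z' hne
      by_cases h2 : z'.2 = z.2
      · have h1 : z'.1 ≠ z'.2 := by
          intro h
          exact hne (Prod.ext (h.trans h2) h2)
        have hc := hcol z'
        rw [if_neg h1] at hc
        exact (Finset.sum_eq_zero_iff_of_nonneg (fun w _ => hπ0 w z')).1 hc z
          (Finset.mem_univ z)
      · exact hslice z z' (fun h => h2 h.symm)
    have hrow' : ∀ z : Fin n × Fin n, π z (z.2, z.2) = pτ z.1 z.2 := by
      intro z
      have h := hrow z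
      rw [Finset.sum_eq_single (z.2, z.2)] at h
      · exact h
      · intro b _ hb; exact hzero z b hb
      · intro h'; exact absurd (Finset.mem_univ _) h'
    calc (∑ x, ∑ y, if x = y then 0 else pτ x y)
        = ∑ z : Fin n × Fin n, (if z.1 = z.2 then 0 else pτ z.1 z.2) := by
          rw [Fintype.sum_prod_type]
      _ ≤ ∑ z : Fin n × Fin n, d z (z.2, z.2) * π z (z.2, z.2) := by
          apply Finset.sum_le_sum
          intro z _
          by_cases h : z.1 = z.2
          · have hz : (z.2, z.2) = z := Prod.ext h.symm rfl
            rw [if_pos h, hz, hd0 z, zero_mul]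
          · rw [hrow' z, if_neg h]
            have : d z (z.2, z.2) = 1 := by
              have := hdC z.1 z.2 h
              simpa using this
            rw [this, one_mul]
      _ = ∑ z, ∑ z', d z z' * π z z' := by
          apply Finset.sum_congr rfl
          intro z _
          rw [Finset.sum_eq_single (z.2, z.2)]
          · intro b _ hb; rw [hzero z b hb, mul_zero]
          · intro h'; exact absurd (Finset.mem_univ _) h'
  · refine ⟨fun z z' => if z' = (z.2, z.2) then pτ z.1 z.2 else 0, ?_, ?_, ?_, ?_, ?_⟩
    · intro z z'
      dsimp only
      split
      · exact hpτ0 _ _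
      · exact le_refl 0
    · intro z z' h
      dsimp only
      rw [if_neg]
      intro h'
      exact h (by rw [h'])
    · intro z'
      obtain ⟨a, b⟩ := z'
      dsimp only
      rw [Fintype.sum_prod_type]
      by_cases h : a = b
      · subst h
        simp only
        have : ∀ x : Fin n, (∑ y : Fin n, if ((a, a) : Fin n × Fin n) = (y, y) then pτ x y else 0) = pτ x a := by
          intro x
          rw [Finset.sum_eq_single a]
          · simp
          · intro y _ hy
            rw [if_neg]
            intro hh
            exact hy ((Prod.ext_iff.1 hh).1.symm)
          · intro h'; exact absurd (Finset.mem_univ _) h'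
        rw [Finset.sum_congr rfl (fun x _ => this x)]
        simpa using hmarg a
      · rw [if_neg h]
        apply Finset.sum_eq_zero
        intro x _
        apply Finset.sum_eq_zero
        intro y _
        rw [if_neg]
        intro hh
        obtain ⟨h1, h2⟩ := Prod.ext_iff.1 hh
        exact h (h1.trans h2.symm)
    · intro z
      dsimp only
      rw [Finset.sum_eq_single ((z.2, z.2) : Fin n × Fin n)]
      · rw [if_pos rfl]
      · intro b _ hb; rw [if_neg hb]
      · intro h'; exact absurd (Finset.mem_univ _) h'
    · have : ∀ z : Fin n × Fin n,
          (∑ z', d z z' * if z' = (z.2, z.2) then pτ z.1 z.2 else 0)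
            = if z.1 = z.2 then 0 else pτ z.1 z.2 := by
        intro z
        rw [Finset.sum_eq_single ((z.2, z.2) : Fin n × Fin n)]
        · rw [if_pos rfl]
          by_cases h : z.1 = z.2
          · have hz : ((z.2, z.2) : Fin n × Fin n) = z := Prod.ext h.symm rfl
            rw [if_pos h, hz, hd0 z, zero_mul]
          · rw [if_neg h]
            have hd : d z (z.2, z.2) = 1 := by
              have := hdC z.1 z.2 h
              simpa using this
            rw [hd, one_mul]
        · intro b _ hb; rw [if_neg hb, mul_zero]
        · intro h'; exact absurd (Finset.mem_univ _) h'
      rw [Finset.sum_congr rfl (fun z _ => this z), Fintype.sum_prod_type]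
end

section
/- For the two-level system with p^Y = (p, 1−p), p < 1/2 (or p > 1/2 symmetrically), diagonal initial distribution p_0^{XY} = diag(p, 1−p), and W ∈ [0, min(p, 1−p)], the final distribution p_τ^{XY} with entries p_τ^{XY}(1,1) = (p−W)(1−W)/(1−2W), p_τ^{XY}(1,2) = (p−W)W/(1−2W), p_τ^{XY}(2,1) = (1−p−W)W/(1−2W), p_τ^{XY}(2,2) = (1−p−W)(1−W)/(1−2W) is a probability distribution with Y-marginal (p, 1−p) and achieves conditional entropy S_τ^{Y|X} = −W ln W − (1−W) ln(1−W) = S(p̃_W^Y). -/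
/-- (Two-level system.) For `p^Y = (p, 1−p)` with `p < 1/2` and `W ∈ [0, min(p, 1−p)]`,
the 2×2 final distribution with entries
`p_τ(1,1) = (p−W)(1−W)/(1−2W)`, `p_τ(1,2) = (p−W)W/(1−2W)`,
`p_τ(2,1) = (1−p−W)W/(1−2W)`, `p_τ(2,2) = (1−p−W)(1−W)/(1−2W)`
is a probability distribution with `Y`-marginal `(p, 1−p)` and achieves conditional
entropy `S_τ^{Y|X} = −W ln W − (1−W) ln(1−W) = S(p̃_W^Y)`. -/
theorem twoLevel_optimal (p W : ℝ) (hp0 : 0 < p) (hp : p < 1 / 2)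
    (hW0 : 0 ≤ W) (hW : W ≤ min p (1 - p)) :
    let a : ℝ := (p - W) * (1 - W) / (1 - 2 * W)   -- p_τ(1,1)
    let b : ℝ := (p - W) * W / (1 - 2 * W)         -- p_τ(1,2)
    let c : ℝ := (1 - p - W) * W / (1 - 2 * W)     -- p_τ(2,1)
    let d : ℝ := (1 - p - W) * (1 - W) / (1 - 2 * W) -- p_τ(2,2)
    (0 ≤ a ∧ 0 ≤ b ∧ 0 ≤ c ∧ 0 ≤ d) ∧
      a + b + c + d = 1 ∧
      (a + c = p ∧ b + d = 1 - p) ∧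
      ((a + b) * (-((a / (a + b)) * Real.log (a / (a + b)) +
            (b / (a + b)) * Real.log (b / (a + b)))) +
          (c + d) * (-((c / (c + d)) * Real.log (c / (c + d)) +
            (d / (c + d)) * Real.log (d / (c + d)))) =
        -(W * Real.log W) - (1 - W) * Real.log (1 - W)) := by
  intro a b c d
  have hWp : W ≤ p := le_trans hW (min_le_left _ _)
  have h2W : (0:ℝ) < 1 - 2 * W := by linarith
  have h2W' : (1 - 2 * W) ≠ 0 := ne_of_gt h2W
  have hpW : 0 ≤ p - W := by linarith
  have h1pW : 0 < 1 - p - W := by linarith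
  have hW1 : W < 1 := by linarith
  have hab : a + b = (p - W) / (1 - 2 * W) := by
    simp only [a, b]
    field_simp
    ring
  have hcd : c + d = (1 - p - W) / (1 - 2 * W) := by
    simp only [c, d]
    field_simp
    ring
  refine ⟨⟨?_, ?_, ?_, ?_⟩, ?_, ⟨?_, ?_⟩, ?_⟩
  · exact div_nonneg (mul_nonneg hpW (by linarith)) h2W.le
  · exact div_nonneg (mul_nonneg hpW hW0) h2W.le
  · exact div_nonneg (mul_nonneg h1pW.le hW0) h2W.le
  · exact div_nonneg (mul_nonneg h1pW.le (by linarith)) h2W.le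
  · simp only [a, b, c, d]; rw [← add_div, ← add_div, ← add_div, div_eq_one_iff_eq h2W']; ring
  · simp only [a, c]; rw [← add_div, div_eq_iff h2W']; ring
  · simp only [b, d]; rw [← add_div, div_eq_iff h2W']; ring
  · have hcd0 : 0 < c + d := by rw [hcd]; positivity
    have hcds : c / (c + d) = W := by
      rw [hcd]; simp only [c]; rw [div_div_div_cancel_right₀]
      · exact mul_div_cancel_left₀ _ (ne_of_gt h1pW)
      · exact h2W'
    have hdds : d / (c + d) = 1 - W := by
      rw [hcd]; simp only [d]; rw [div_div_div_cancel_right₀]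
      · exact mul_div_cancel_left₀ _ (ne_of_gt h1pW)
      · exact h2W'
    rcases eq_or_lt_of_le hpW with h | h
    · -- W = p : a = b = 0, c + d = 1
      have hpWeq : p - W = 0 := h.symm
      have ha0 : a = 0 := by simp [a, hpWeq]
      have hb0 : b = 0 := by simp [b, hpWeq]
      have hcd1 : c + d = 1 := by
        rw [hcd]; rw [div_eq_one_iff_eq h2W']; linarith
      rw [ha0, hb0, hcds, hdds, hcd1]
      simp; ring
    · have hab0 : 0 < a + b := by rw [hab]; positivity
      have has : a / (a + b) = 1 - W := by
        rw [hab]; simp only [a]; rw [div_div_div_cancel_right₀]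
        · exact mul_div_cancel_left₀ _ (ne_of_gt h)
        · exact h2W'
      have hbs : b / (a + b) = W := by
        rw [hab]; simp only [b]; rw [div_div_div_cancel_right₀]
        · exact mul_div_cancel_left₀ _ (ne_of_gt h)
        · exact h2W'
      have hsum : (a + b) + (c + d) = 1 := by
        rw [hab, hcd, ← add_div, div_eq_one_iff_eq h2W']; ring
      rw [has, hbs, hcds, hdds]
      linear_combination (-(W * Real.log W) - (1 - W) * Real.log (1 - W)) * hsum
end
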